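/- arXiv:2412.06331 — 7 statements merged into one kernel-verified Lean document; each statement's English description precedes it below -/
import Mathlib

section
/- Let G be a graph with a perfect matching M, and let T be an independent set of vertices of G. Let M_T be the set of edges of M having an endpoint in T. If the subgraph of G formed by the union of all paths of length 2 whose two endpoints both lie in T contains no M-alternating cycle, then the forcing number of M satisfies f(G,M) ≤ |M| − |T|. -/
/-!
Let `S` be the set of edges of `M` with no endpoint in `T`. Since `T` is independent, the edges
`t — m(t)` for `t ∈ T` are `|T|` distinct edges of `M` outside `S`, so `|S| ≤ |M| - |T|`.

`S` forces `M`: let `M' ≠ M` be a perfect matching containing `S`, with partner maps `m'` and `m`.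
Every edge of `M` missing from `M'` meets `T`, hence some `t₀ ∈ T` has `m'(t₀) ≠ m(t₀)`. From such
a `t` we have `m'(t) ∉ T`, so the `M`-edge at `m'(t)` leaves `M'` and its other end
`σ(t) = m(m'(t))` again lies in `T` with different partners. Following the injective map `σ` from
`t₀` until it returns traces the closed walk `t₀, m'(t₀), σ(t₀), m'(σ(t₀)), …`: an `M`-alternating
cycle made of paths of length two between distinct vertices of `T`, which the hypothesis excludes.
-/

open SimpleGraph

variable {V : Type*}

/-- `S` is a forcing set of the perfect matching `M` of `G`: a subset of the edges of `M`
contained in no other perfect matching of `G`. -/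
def IsForcingSet (G : SimpleGraph V) (M : G.Subgraph) (S : Set (Sym2 V)) : Prop :=
  S ⊆ M.edgeSet ∧ ∀ M' : G.Subgraph, M'.IsPerfectMatching → S ⊆ M'.edgeSet → M' = M

/-- The forcing number of a perfect matching: minimum size of a forcing set. -/
noncomputable def forcingNum (G : SimpleGraph V) (M : G.Subgraph) : ℕ :=
  sInf {k | ∃ S : Set (Sym2 V), IsForcingSet G M S ∧ S.ncard = k}

/-- The maximum forcing number of `G`. -/
noncomputable def maxForcingNum (G : SimpleGraph V) : ℕ :=
  sSup {k | ∃ M : G.Subgraph, M.IsPerfectMatching ∧ forcingNum G M = k}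

/-- The edges of the list `l`, read cyclically, alternate in and out of the edge set `M`. -/
def CyclicAlt (M : Set (Sym2 V)) (l : List (Sym2 V)) : Prop :=
  (l ++ l.take 1).Chain' (fun e f => (e ∈ M) ↔ (f ∉ M))

lemma cyclicAlt_map_range {M : Set (Sym2 V)} {f : ℕ → Sym2 V} {n : ℕ} (hn : Even n)
    (hf : ∀ k, f k ∈ M ↔ Odd k) : CyclicAlt M ((List.range n).map f) := by
  obtain rfl | ⟨m, rfl⟩ : n = 0 ∨ ∃ m, n = m + 1 := by cases n <;> simp
  · exact List.isChain_nil
  have hm : Odd m := by simpa [Nat.even_add_one] using hn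
  change List.IsChain _ _
  rw [List.range_succ_eq_map, List.map_cons, List.take_succ_cons, List.take_zero,
    ← List.map_cons, ← List.range_succ_eq_map, List.isChain_append]
  refine ⟨?_, List.isChain_singleton _, ?_⟩
  · rw [List.isChain_map, List.isChain_range_succ]
    intro k _
    simp [hf, Nat.odd_add_one]
  · simp [List.getLast?_range, hf, hm]

namespace SimpleGraph

variable {G : SimpleGraph V}

def Walk.ofSeq (z : ℕ → V) (hz : ∀ k, G.Adj (z k) (z (k + 1))) : (n : ℕ) → G.Walk (z 0) (z n)
  | 0 => nil
  | n + 1 => (ofSeq z hz n).concat (hz n)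

namespace Walk

variable {z : ℕ → V} {hz : ∀ k, G.Adj (z k) (z (k + 1))}

lemma support_ofSeq (n : ℕ) : (ofSeq z hz n).support = (List.range (n + 1)).map z := by
  induction n with
  | zero => rfl
  | succ n ih =>
    rw [ofSeq, support_concat, ih, List.range_succ (n := n + 1), List.map_append]
    rfl

lemma edges_ofSeq (n : ℕ) :
    (ofSeq z hz n).edges = (List.range n).map fun k => s(z k, z (k + 1)) := by
  induction n with
  | zero => rfl
  | succ n ih => rw [ofSeq, edges_concat, ih, List.range_succ]; simp

lemma length_ofSeq (n : ℕ) : (ofSeq z hz n).length = n := by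
  simpa using congrArg List.length (edges_ofSeq (hz := hz) n)

lemma IsCycle.of_nodup_dropLast_support {u : V} {p : G.Walk u u}
    (hp : p.support.dropLast.Nodup) (hlen : 3 ≤ p.length) : p.IsCycle := by
  have hnil : ¬ p.Nil := by rw [← length_eq_zero_iff]; omega
  rw [isCycle_iff_isPath_tail_and_le_length, isPath_def,
    (support_tail_perm_support_dropLast p).nodup_iff, support_dropLast hnil]
  exact ⟨hp, hlen⟩

lemma isCycle_ofSeq {n : ℕ} (hn : 3 ≤ n) (hzn : z n = z 0) (hinj : Set.InjOn z (Set.Iio n)) :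
    ((ofSeq z hz n).copy rfl hzn).IsCycle := by
  refine IsCycle.of_nodup_dropLast_support ?_ (by rwa [length_copy, length_ofSeq])
  rw [support_copy, support_ofSeq, List.range_succ, List.map_append, List.map_singleton,
    List.dropLast_concat]
  exact List.nodup_range.map_on fun a ha b hb h =>
    hinj (List.mem_range.mp ha) (List.mem_range.mp hb) h

end Walk

def twoPathEdges (G : SimpleGraph V) (T : Set V) : Set (Sym2 V) :=
  {e | ∃ a b c, a ∈ T ∧ c ∈ T ∧ a ≠ c ∧ G.Adj a b ∧ G.Adj b c ∧ (e = s(a, b) ∨ e = s(b, c))}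

def Subgraph.edgesAvoiding (M : G.Subgraph) (T : Set V) : Set (Sym2 V) :=
  {e | e ∈ M.edgeSet ∧ ∀ t ∈ T, t ∉ e}

namespace Subgraph.IsPerfectMatching

open Function

variable {M M' : G.Subgraph} (hM : M.IsPerfectMatching) {T : Set V}

noncomputable def partner (v : V) : V := (isPerfectMatching_iff.mp hM v).choose

lemma adj_partner (v : V) : M.Adj v (hM.partner v) :=
  (isPerfectMatching_iff.mp hM v).choose_spec.1

lemma eq_partner_of_adj {v w : V} (h : M.Adj v w) : w = hM.partner v :=
  (isPerfectMatching_iff.mp hM v).choose_spec.2 w h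

lemma adj_iff_eq_partner {v w : V} : M.Adj v w ↔ w = hM.partner v :=
  ⟨hM.eq_partner_of_adj, fun h => h ▸ hM.adj_partner v⟩

@[simp]
lemma partner_partner (v : V) : hM.partner (hM.partner v) = v :=
  (hM.eq_partner_of_adj (hM.adj_partner v).symm).symm

lemma partner_injective : Injective hM.partner :=
  LeftInverse.injective hM.partner_partner

lemma partner_notMem (hT : ∀ a ∈ T, ∀ b ∈ T, ¬ G.Adj a b) {t : V} (ht : t ∈ T) :
    hM.partner t ∉ T :=
  fun h => hT t ht _ h (M.adj_sub (hM.adj_partner t))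

lemma ncard_edgesAvoiding_add_ncard_le [Finite V] (hM : M.IsPerfectMatching)
    (hT : ∀ a ∈ T, ∀ b ∈ T, ¬ G.Adj a b) :
    (M.edgesAvoiding T).ncard + T.ncard ≤ M.edgeSet.ncard := by
  set edgeAt := fun t => s(t, hM.partner t)
  have hinj : Set.InjOn edgeAt T := by
    intro t ht t' ht' h
    rcases Sym2.eq_iff.mp h with ⟨h, -⟩ | ⟨h, -⟩
    · exact h
    · exact absurd (M.adj_sub (hM.adj_partner t')) (h ▸ hT t' ht' t ht)
  have hdisj : Disjoint (M.edgesAvoiding T) (edgeAt '' T) := by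
    rw [Set.disjoint_left]
    rintro e ⟨-, he⟩ ⟨t, ht, rfl⟩
    exact he t ht (Sym2.mem_mk_left _ _)
  have hsub : M.edgesAvoiding T ∪ edgeAt '' T ⊆ M.edgeSet := by
    rintro e (he | ⟨t, -, rfl⟩)
    exacts [he.1, hM.adj_partner t]
  calc (M.edgesAvoiding T).ncard + T.ncard
      = (M.edgesAvoiding T ∪ edgeAt '' T).ncard := by
        rw [Set.ncard_union_eq hdisj, hinj.ncard_image]
    _ ≤ M.edgeSet.ncard := Set.ncard_le_ncard hsub

variable {hM} (hM' : M'.IsPerfectMatching)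

lemma eq_of_partner_eq (h : ∀ v, hM'.partner v = hM.partner v) : M' = M := by
  refine Subgraph.ext (by rw [hM'.2.verts_eq_univ, hM.2.verts_eq_univ]) ?_
  ext v w
  rw [hM'.adj_iff_eq_partner, hM.adj_iff_eq_partner, h]

lemma partner_partner_ne {v : V} (h : hM'.partner v ≠ hM.partner v) :
    hM'.partner (hM.partner v) ≠ hM.partner (hM.partner v) := by
  rw [partner_partner]
  intro h'
  exact h (by simpa using (congrArg hM'.partner h').symm)

lemma mem_or_partner_mem_of_partner_ne (hS : M.edgesAvoiding T ⊆ M'.edgeSet) {v : V}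
    (h : hM'.partner v ≠ hM.partner v) : v ∈ T ∨ hM.partner v ∈ T := by
  by_contra! hv
  have hS' : s(v, hM.partner v) ∈ M'.edgeSet := hS ⟨hM.adj_partner v, fun t ht hte => by
    rcases Sym2.mem_iff.mp hte with rfl | rfl
    exacts [hv.1 ht, hv.2 ht]⟩
  exact h (hM'.eq_partner_of_adj hS').symm

variable (hM)

def disagreeSet (T : Set V) : Set V := {t | t ∈ T ∧ hM'.partner t ≠ hM.partner t}

lemma disagreeSet_nonempty (hK : ∀ v, hM'.partner v ≠ hM.partner v → v ∈ T ∨ hM.partner v ∈ T)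
    (hne : M' ≠ M) : (disagreeSet hM hM' T).Nonempty := by
  obtain ⟨v, hv⟩ : ∃ v, hM'.partner v ≠ hM.partner v := by
    by_contra! h
    exact hne (eq_of_partner_eq hM' h)
  rcases hK v hv with h | h
  exacts [⟨v, h, hv⟩, ⟨_, h, partner_partner_ne hM' hv⟩]

lemma partner_comp_partner_ne_self {t : V} (ht : t ∈ disagreeSet hM hM' T) :
    (hM.partner ∘ hM'.partner) t ≠ t := fun h =>
  ht.2 ((hM.partner_partner _).symm.trans (congrArg hM.partner h))

lemma mapsTo_disagreeSet (hT : ∀ a ∈ T, ∀ b ∈ T, ¬ G.Adj a b)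
    (hK : ∀ v, hM'.partner v ≠ hM.partner v → v ∈ T ∨ hM.partner v ∈ T) :
    Set.MapsTo (hM.partner ∘ hM'.partner) (disagreeSet hM hM' T) (disagreeSet hM hM' T) := by
  rintro t ⟨ht, hne⟩
  have hx : hM'.partner (hM'.partner t) ≠ hM.partner (hM'.partner t) := by
    rw [partner_partner]
    exact fun h => hne ((hM.partner_partner _).symm.trans (congrArg hM.partner h.symm))
  exact ⟨(hK _ hx).resolve_left (hM'.partner_notMem hT ht), partner_partner_ne hM' hx⟩

lemma two_le_minimalPeriod [Finite V] {t₀ : V} (ht₀ : t₀ ∈ disagreeSet hM hM' T) :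
    2 ≤ minimalPeriod (hM.partner ∘ hM'.partner) t₀ := by
  have hper := (hM.partner_injective.comp hM'.partner_injective).mem_periodicPts t₀
  have hpos := minimalPeriod_pos_of_mem_periodicPts hper
  have hne : minimalPeriod (hM.partner ∘ hM'.partner) t₀ ≠ 1 := fun h =>
    partner_comp_partner_ne_self hM hM' ht₀ (minimalPeriod_eq_one_iff_isFixedPt.mp h)
  omega

noncomputable def zigzag (t₀ : V) (k : ℕ) : V :=
  if Even k then (hM.partner ∘ hM'.partner)^[k / 2] t₀
  else hM'.partner ((hM.partner ∘ hM'.partner)^[k / 2] t₀)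

variable (t₀ : V)

lemma zigzag_two_mul (i : ℕ) : zigzag hM hM' t₀ (2 * i) = (hM.partner ∘ hM'.partner)^[i] t₀ := by
  simp [zigzag]

lemma zigzag_two_mul_add_one (i : ℕ) :
    zigzag hM hM' t₀ (2 * i + 1) = hM'.partner (zigzag hM hM' t₀ (2 * i)) := by
  simp [zigzag, show (2 * i + 1) / 2 = i by omega]

lemma zigzag_two_mul_add_two (i : ℕ) :
    zigzag hM hM' t₀ (2 * i + 2) = hM.partner (zigzag hM hM' t₀ (2 * i + 1)) := by
  rw [show 2 * i + 2 = 2 * (i + 1) by ring, zigzag_two_mul_add_one, zigzag_two_mul,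
    zigzag_two_mul, iterate_succ_apply', comp_apply]

lemma adj_zigzag (k : ℕ) : G.Adj (zigzag hM hM' t₀ k) (zigzag hM hM' t₀ (k + 1)) := by
  obtain ⟨i, rfl | rfl⟩ := Nat.even_or_odd' k
  · rw [zigzag_two_mul_add_one]
    exact M'.adj_sub (hM'.adj_partner _)
  · rw [zigzag_two_mul_add_two]
    exact M.adj_sub (hM.adj_partner _)

variable {t₀}

lemma zigzag_two_mul_mem (hT : ∀ a ∈ T, ∀ b ∈ T, ¬ G.Adj a b)
    (hK : ∀ v, hM'.partner v ≠ hM.partner v → v ∈ T ∨ hM.partner v ∈ T)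
    (ht₀ : t₀ ∈ disagreeSet hM hM' T) (i : ℕ) :
    zigzag hM hM' t₀ (2 * i) ∈ disagreeSet hM hM' T := by
  rw [zigzag_two_mul]
  exact (mapsTo_disagreeSet hM hM' hT hK).iterate i ht₀

lemma zigzag_edge_mem_iff (hmem : ∀ i, zigzag hM hM' t₀ (2 * i) ∈ disagreeSet hM hM' T)
    (k : ℕ) : s(zigzag hM hM' t₀ k, zigzag hM hM' t₀ (k + 1)) ∈ M.edgeSet ↔ Odd k := by
  obtain ⟨i, rfl | rfl⟩ := Nat.even_or_odd' k
  · rw [Subgraph.mem_edgeSet, hM.adj_iff_eq_partner, zigzag_two_mul_add_one]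
    exact iff_of_false (hmem i).2 (Nat.not_odd_iff_even.mpr (even_two_mul i))
  · rw [Subgraph.mem_edgeSet, zigzag_two_mul_add_two]
    exact iff_of_true (hM.adj_partner _) (odd_two_mul_add_one i)

lemma zigzag_edge_mem_twoPathEdges
    (hmem : ∀ i, zigzag hM hM' t₀ (2 * i) ∈ disagreeSet hM hM' T) (k : ℕ) :
    s(zigzag hM hM' t₀ k, zigzag hM hM' t₀ (k + 1)) ∈ G.twoPathEdges T := by
  obtain ⟨i, hk⟩ := Nat.even_or_odd' k
  refine ⟨zigzag hM hM' t₀ (2 * i), zigzag hM hM' t₀ (2 * i + 1), zigzag hM hM' t₀ (2 * i + 2),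
    (hmem i).1, (hmem (i + 1)).1, ?_, adj_zigzag hM hM' t₀ (2 * i),
    adj_zigzag hM hM' t₀ (2 * i + 1), ?_⟩
  · rw [zigzag_two_mul_add_two, zigzag_two_mul_add_one]
    exact (partner_comp_partner_ne_self hM hM' (hmem i)).symm
  · rcases hk with rfl | rfl
    exacts [Or.inl rfl, Or.inr rfl]

lemma zigzag_injOn (hT : ∀ a ∈ T, ∀ b ∈ T, ¬ G.Adj a b)
    (hmem : ∀ i, zigzag hM hM' t₀ (2 * i) ∈ disagreeSet hM hM' T) :
    Set.InjOn (zigzag hM hM' t₀)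
      (Set.Iio (2 * minimalPeriod (hM.partner ∘ hM'.partner) t₀)) := by
  have hiter : ∀ i i', 2 * i < 2 * minimalPeriod (hM.partner ∘ hM'.partner) t₀ →
      2 * i' < 2 * minimalPeriod (hM.partner ∘ hM'.partner) t₀ →
      zigzag hM hM' t₀ (2 * i) = zigzag hM hM' t₀ (2 * i') → 2 * i = 2 * i' := by
    intro i i' hi hi' h
    rw [zigzag_two_mul, zigzag_two_mul] at h
    rw [iterate_injOn_Iio_minimalPeriod (Set.mem_Iio.mpr (by omega))
      (Set.mem_Iio.mpr (by omega)) h]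
  have heven_ne_odd : ∀ i i', zigzag hM hM' t₀ (2 * i) ≠ zigzag hM hM' t₀ (2 * i' + 1) := by
    intro i i' h
    have := (hmem i).1
    rw [h, zigzag_two_mul_add_one] at this
    exact hM'.partner_notMem hT (hmem i').1 this
  intro k hk j hj h
  simp only [Set.mem_Iio] at hk hj
  obtain ⟨i, rfl | rfl⟩ := Nat.even_or_odd' k <;> obtain ⟨i', rfl | rfl⟩ := Nat.even_or_odd' j
  · exact hiter i i' hk hj h
  · exact absurd h (heven_ne_odd i i')
  · exact absurd h.symm (heven_ne_odd i' i)
  · rw [zigzag_two_mul_add_one, zigzag_two_mul_add_one] at h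
    rw [hiter i i' (by omega) (by omega) (hM'.partner_injective h)]

lemma exists_alternating_cycle [Finite V] (hT : ∀ a ∈ T, ∀ b ∈ T, ¬ G.Adj a b)
    (hK : ∀ v, hM'.partner v ≠ hM.partner v → v ∈ T ∨ hM.partner v ∈ T)
    (ht₀ : t₀ ∈ disagreeSet hM hM' T) :
    ∃ (v : V) (w : G.Walk v v), w.IsCycle ∧ (∀ e ∈ w.edges, e ∈ G.twoPathEdges T) ∧
      CyclicAlt M.edgeSet w.edges := by
  set p := minimalPeriod (hM.partner ∘ hM'.partner) t₀
  have hmem := zigzag_two_mul_mem hM hM' hT hK ht₀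
  have hclosed : zigzag hM hM' t₀ (2 * p) = zigzag hM hM' t₀ 0 := by
    rw [zigzag_two_mul, iterate_minimalPeriod]
    simp [zigzag]
  refine ⟨_, (Walk.ofSeq _ (adj_zigzag hM hM' t₀) (2 * p)).copy rfl hclosed,
    Walk.isCycle_ofSeq (by have := two_le_minimalPeriod hM hM' ht₀; omega) hclosed
      (zigzag_injOn hM hM' hT hmem), ?_, ?_⟩
  all_goals rw [Walk.edges_copy, Walk.edges_ofSeq]
  · simp only [List.mem_map]
    rintro _ ⟨k, -, rfl⟩
    exact zigzag_edge_mem_twoPathEdges hM hM' hmem k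
  · exact cyclicAlt_map_range (even_two_mul p) (zigzag_edge_mem_iff hM hM' hmem)

lemma isForcingSet_edgesAvoiding [Finite V] (hM : M.IsPerfectMatching)
    (hT : ∀ a ∈ T, ∀ b ∈ T, ¬ G.Adj a b)
    (hno : ¬ ∃ (v : V) (w : G.Walk v v), w.IsCycle ∧ (∀ e ∈ w.edges, e ∈ G.twoPathEdges T) ∧
      CyclicAlt M.edgeSet w.edges) :
    IsForcingSet G M (M.edgesAvoiding T) := by
  refine ⟨fun e he => he.1, fun M' hM' hS => by_contra fun hne => ?_⟩
  have hK : ∀ v, hM'.partner v ≠ hM.partner v → v ∈ T ∨ hM.partner v ∈ T :=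
    fun _ => mem_or_partner_mem_of_partner_ne hM' hS
  obtain ⟨t₀, ht₀⟩ := disagreeSet_nonempty hM hM' hK hne
  exact hno (exists_alternating_cycle hM hM' hT hK ht₀)

end Subgraph.IsPerfectMatching

end SimpleGraph

/-- marked-vertex lemma. -/
theorem stmt0 (G : SimpleGraph V) [Fintype V] (M : G.Subgraph)
    (hM : M.IsPerfectMatching) (T : Set V)
    (hT : ∀ a ∈ T, ∀ b ∈ T, ¬ G.Adj a b)
    (hno : ¬ ∃ (v : V) (w : G.Walk v v), w.IsCycle ∧
      (∀ e ∈ w.edges, e ∈ {e | ∃ a b c, a ∈ T ∧ c ∈ T ∧ a ≠ c ∧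
        G.Adj a b ∧ G.Adj b c ∧ (e = s(a, b) ∨ e = s(b, c))}) ∧
      CyclicAlt M.edgeSet w.edges) :
    forcingNum G M ≤ M.edgeSet.ncard - T.ncard := by
  have hle : forcingNum G M ≤ (M.edgesAvoiding T).ncard :=
    Nat.sInf_le ⟨_, hM.isForcingSet_edgesAvoiding hT hno, rfl⟩
  have hcard := hM.ncard_edgesAvoiding_add_ncard_le hT
  omega
end

section
/- If G is a graph with a perfect matching M such that the subgraph of G induced by the vertices covered by a subset M' ⊆ M contains no M-alternating cycle, then that induced subgraph has a unique perfect matching, and consequently M ∖ M' is a forcing set of M. -/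
open SimpleGraph

variable {V : Type*}

/-!
If `P ≠ Q` are perfect matchings of a finite graph, their symmetric difference is a nonempty
union of cycles alternating with respect to `P`, and every vertex of such a cycle has a `P`-edge
that is not in `Q`.

For the first claim, compare the restriction of `M` to `S` with another perfect matching of
`G[S]`: the resulting cycle lies in `G[S]`, so it is an `M`-alternating cycle of `G` inside `S`.
For the second, compare `M` with a perfect matching `N ⊇ M \ M'`: every vertex of the cycle has
an `M`-edge outside `N`, hence in `M'`, so again the cycle lies inside `S`.
-/

open scoped symmDiff

lemma cyclicAlt_iff (M : Set (Sym2 V)) (l : List (Sym2 V)) :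
    CyclicAlt M l ↔ (l ++ l.take 1).IsChain (fun e f => e ∈ M ↔ f ∉ M) :=
  Iff.rfl

lemma cyclicAlt_map {W : Type*} (f : Sym2 W → Sym2 V) (M : Set (Sym2 V)) (l : List (Sym2 W)) :
    CyclicAlt M (l.map f) ↔ CyclicAlt (f ⁻¹' M) l := by
  rw [cyclicAlt_iff, cyclicAlt_iff, ← List.map_take, ← List.map_append, List.isChain_map]
  rfl

lemma List.Nodup.isChain_ne_append_take_one {α : Type*} {l : List α} (hl : l.Nodup)
    (hlen : 2 ≤ l.length) : (l ++ l.take 1).IsChain (· ≠ ·) := by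
  obtain _ | ⟨a, _ | ⟨b, t⟩⟩ := l
  · simp at hlen
  · simp at hlen
  · refine List.isChain_append.mpr ⟨hl.isChain, by simp, fun x hx y hy => ?_⟩
    simp only [List.take_succ_cons, List.take_zero, List.head?_cons, Option.mem_def,
      Option.some.injEq] at hy
    subst hy
    rw [List.getLast?_cons_cons] at hx
    rintro rfl
    exact (List.nodup_cons.mp hl).1 (List.mem_of_getLast? hx)

namespace SimpleGraph

variable {W : Type*} {G : SimpleGraph V} {H : SimpleGraph W}

lemma Walk.isChain_edges_of_isAlternating {F : SimpleGraph V} (halt : G.IsAlternating F)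
    {u v : V} (p : G.Walk u v) (hp : p.edges.IsChain (· ≠ ·)) :
    p.edges.IsChain (fun e f => e ∈ F.edgeSet ↔ f ∉ F.edgeSet) := by
  induction p with
  | nil => simp
  | @cons a b _ h q ih =>
    cases q with
    | nil => simp
    | @cons _ c _ h' r =>
      rw [edges_cons, edges_cons, List.isChain_cons_cons] at hp ⊢
      refine ⟨?_, ih (by rw [edges_cons]; exact hp.2)⟩
      have hne : a ≠ c := fun heq => hp.1 (by subst heq; exact Sym2.eq_swap)
      simpa [F.adj_comm a b] using halt hne h.symm h'

lemma Walk.IsCycle.cyclicAlt {F : SimpleGraph V} (halt : G.IsAlternating F) {v : V}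
    {c : G.Walk v v} (hc : c.IsCycle) : CyclicAlt F.edgeSet c.edges := by
  cases c with
  | nil => exact absurd hc (by simp)
  | cons h q =>
    have hedges : (cons h q).edges ++ (cons h q).edges.take 1 = ((cons h q).concat h).edges := by
      simp [edges_concat]
    rw [cyclicAlt_iff, hedges]
    refine Walk.isChain_edges_of_isAlternating halt _ ?_
    rw [← hedges]
    exact hc.edges_nodup.isChain_ne_append_take_one
      (by rw [length_edges]; have := hc.three_le_length; omega)

namespace Subgraph

lemma edgeSet_comap_embedding (f : H ↪g G) (M : G.Subgraph) :
    (M.comap f.toHom).edgeSet = Sym2.map f ⁻¹' M.edgeSet := by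
  ext e
  induction e using Sym2.ind with
  | _ a b => simpa using fun h => f.map_adj_iff.mp (M.adj_sub h)

lemma IsMatching.mk_mem_of_adj {M : G.Subgraph} (hM : M.IsMatching)
    {M' : Set (Sym2 V)} (hM' : M' ⊆ M.edgeSet) {v w : V} (hv : ∃ e ∈ M', v ∈ e)
    (hvw : M.Adj v w) : s(v, w) ∈ M' := by
  obtain ⟨e, he, hve⟩ := hv
  obtain ⟨u, rfl⟩ := Sym2.mem_iff_exists.mp hve
  rwa [(hM (M.edge_vert hvw)).unique hvw (hM' he)]

namespace IsPerfectMatching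

lemma comap_induce {M : G.Subgraph} (hM : M.IsPerfectMatching) {S : Set V}
    (hS : ∀ v ∈ S, ∀ w, M.Adj v w → w ∈ S) :
    (M.comap (Embedding.induce S).toHom).IsPerfectMatching := by
  rw [isPerfectMatching_iff]
  intro v
  obtain ⟨w, hvw, hunique⟩ := hM.1 (hM.2 v)
  exact ⟨⟨w, hS v v.2 w hvw⟩, ⟨M.adj_sub hvw, hvw⟩, fun y hy => Subtype.ext (hunique y hy.2)⟩

variable {P Q : G.Subgraph}

lemma exists_symmDiff_adj (hP : P.IsPerfectMatching) (hQ : Q.IsPerfectMatching)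
    (hne : P ≠ Q) : ∃ a b, (P.spanningCoe ∆ Q.spanningCoe).Adj a b := by
  by_contra! h
  refine hne (Subgraph.ext (by rw [isSpanning_iff.mp hP.2, isSpanning_iff.mp hQ.2]) ?_)
  ext a b
  simpa [symmDiff_def, iff_iff_implies_and_implies] using h a b

lemma exists_adj_not_adj_of_symmDiff_adj (hP : P.IsPerfectMatching)
    (hQ : Q.IsPerfectMatching) {x z : V} (hxz : (P.spanningCoe ∆ Q.spanningCoe).Adj x z) :
    ∃ y, P.Adj x y ∧ ¬ Q.Adj x y := by
  simp only [symmDiff_def] at hxz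
  rcases hxz with hPQ | ⟨hQxz, hPxz⟩
  · exact ⟨z, hPQ⟩
  · obtain ⟨y, hPxy, -⟩ := hP.1 (hP.2 x)
    refine ⟨y, hPxy, fun hQxy => hPxz ?_⟩
    rwa [(hQ.1 (hQ.2 x)).unique hQxz hQxy]

theorem exists_isCycle_cyclicAlt_of_ne [Finite V] (hP : P.IsPerfectMatching)
    (hQ : Q.IsPerfectMatching) (hne : P ≠ Q) :
    ∃ (v : V) (c : G.Walk v v), c.IsCycle ∧ CyclicAlt P.edgeSet c.edges ∧
      ∀ x ∈ c.support, ∃ y, P.Adj x y ∧ ¬ Q.Adj x y := by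
  classical
  obtain ⟨a, b, hab⟩ := hP.exists_symmDiff_adj hQ hne
  obtain ⟨c, hc, -⟩ :=
    (hP.symmDiff_isCycles hQ).exists_cycle_toSubgraph_verts_eq_connectedComponentSupp
      (c := connectedComponentMk _ a) rfl ⟨b, hab⟩
  have hle : P.spanningCoe ∆ Q.spanningCoe ≤ G :=
    symmDiff_le_sup.trans (sup_le P.spanningCoe_le Q.spanningCoe_le)
  refine ⟨a, c.mapLe hle, hc.mapLe hle, ?_, fun x hx => ?_⟩
  · rw [Walk.edges_mapLe_eq_edges, ← edgeSet_spanningCoe]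
    exact hc.cyclicAlt (hP.isAlternating_symmDiff_left hQ)
  · rw [Walk.support_mapLe_eq_support] at hx
    exact hP.exists_adj_not_adj_of_symmDiff_adj hQ
      ((c.rotate x hx).adj_snd (hc.rotate hx).not_nil)

end IsPerfectMatching

end Subgraph

lemma Walk.cyclicAlt_edges_map (f : H ↪g G) (M : G.Subgraph) {u v : W} (c : H.Walk u v) :
    CyclicAlt M.edgeSet (c.map f.toHom).edges ↔ CyclicAlt (M.comap f.toHom).edgeSet c.edges := by
  rw [edges_map, cyclicAlt_map, Subgraph.edgeSet_comap_embedding]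
  rfl

end SimpleGraph

/-- no alternating cycle on `V(M')` gives a unique perfect matching there,
and `M \ M'` is a forcing set of `M`. -/
theorem stmt2 (G : SimpleGraph V) [Fintype V] (M : G.Subgraph)
    (hM : M.IsPerfectMatching) (M' : Set (Sym2 V)) (hM' : M' ⊆ M.edgeSet)
    (S : Set V) (hS : S = {v | ∃ e ∈ M', v ∈ e})
    (hno : ¬ ∃ (v : V) (w : G.Walk v v), w.IsCycle ∧ (∀ x ∈ w.support, x ∈ S) ∧
      CyclicAlt M.edgeSet w.edges) :
    (∃! N : (SimpleGraph.induce S G).Subgraph, N.IsPerfectMatching) ∧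
      IsForcingSet G M (M.edgeSet \ M') := by
  have hclosed : ∀ v ∈ S, ∀ w, M.Adj v w → w ∈ S := by
    subst hS
    exact fun v hv w hvw => ⟨s(v, w), hM.1.mk_mem_of_adj hM' hv hvw, Sym2.mem_mk_right v w⟩
  let f : induce S G ↪g G := Embedding.induce S
  have hN₀ : (M.comap f.toHom).IsPerfectMatching := hM.comap_induce hclosed
  refine ⟨⟨_, hN₀, fun N hN => ?_⟩, Set.sdiff_subset, fun N hN hsub => ?_⟩
  · by_contra hne
    obtain ⟨v, c, hc, halt, -⟩ := hN₀.exists_isCycle_cyclicAlt_of_ne hN (Ne.symm hne)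
    refine hno ⟨_, c.map f.toHom, hc.map f.injective, fun x hx => ?_,
      (c.cyclicAlt_edges_map f M).mpr halt⟩
    rw [Walk.support_map, List.mem_map] at hx
    obtain ⟨y, -, rfl⟩ := hx
    exact y.2
  · by_contra hne
    obtain ⟨v, c, hc, halt, hsupp⟩ := hM.exists_isCycle_cyclicAlt_of_ne hN (Ne.symm hne)
    refine hno ⟨v, c, hc, fun x hx => ?_, halt⟩
    obtain ⟨y, hMxy, hNxy⟩ := hsupp x hx
    have hxy : s(x, y) ∈ M' := by
      by_contra h
      exact hNxy (hsub ⟨hMxy, h⟩)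
    exact hS ▸ ⟨_, hxy, Sym2.mem_mk_left x y⟩
end

section
/- Every 2×2-polyomino has an odd number of interior vertices. -/
/-- Two unit cells (or two lattice points) of the plane square grid are adjacent if they
differ by one in exactly one coordinate. -/
def CellAdj (p q : ℤ × ℤ) : Prop :=
  (p.1 = q.1 ∧ (p.2 = q.2 + 1 ∨ q.2 = p.2 + 1)) ∨
  (p.2 = q.2 ∧ (p.1 = q.1 + 1 ∨ q.1 = p.1 + 1))

/-- A set of cells is connected (via edge-adjacency, staying inside the set). -/
def ConnectedCells (S : Set (ℤ × ℤ)) : Prop :=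
  ∀ p ∈ S, ∀ q ∈ S, Relation.ReflTransGen (fun a b => CellAdj a b ∧ a ∈ S ∧ b ∈ S) p q

/-- A polyomino, given by its finite nonempty set of unit cells: it is cell-connected and
has no holes (every interior face is a unit square, i.e. the complement is connected). -/
def IsPolyomino (P : Finset (ℤ × ℤ)) : Prop :=
  P.Nonempty ∧ ConnectedCells ↑P ∧ ConnectedCells ((↑P : Set (ℤ × ℤ))ᶜ)

/-- The `2×2`-polyomino obtained from `Q` by replacing each unit cell by a `2×2` chessboard. -/
def scale2 (Q : Finset (ℤ × ℤ)) : Finset (ℤ × ℤ) :=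
  Q.biUnion fun c =>
    {(2 * c.1, 2 * c.2), (2 * c.1 + 1, 2 * c.2), (2 * c.1, 2 * c.2 + 1),
      (2 * c.1 + 1, 2 * c.2 + 1)}

/-- The interior vertices (vertices of degree 4) of the polyomino with cell set `P`:
lattice points all four of whose surrounding cells belong to `P`. -/
def interiorVertices (P : Finset (ℤ × ℤ)) : Finset (ℤ × ℤ) :=
  P.filter fun p => (p.1 - 1, p.2) ∈ P ∧ (p.1, p.2 - 1) ∈ P ∧ (p.1 - 1, p.2 - 1) ∈ P

/-!
Each cell `p` of `Q` contributes to `scale2 Q` the interior vertices of its `2 × 2` block: the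
centre, the midpoint of the lower (left) side when the cell below (left of) `p` is in `Q`, and the
lower left corner when the three cells below and left of `p` are. So the count is
`#cells + #adjacent pairs + #2×2 squares` of `Q`, which has the parity of the Euler characteristic
`#cells - #adjacent pairs + #2×2 squares = 1` of a polyomino without holes.

We prove oddness by induction, removing the lexicographically largest cell `c`, whose only
possible neighbours are `L` to its left and `D` below it. If `c` has one neighbour, or both and
the cell `DL` between them is in `Q`, then `Q \ {c}` is again a polyomino and `c` contributes an
even number. Otherwise `L` and `D` lie in different components of `Q \ {c}`: a path joining them
would close up through `c` to a cycle around `DL ∉ Q`, cutting it off from the far side of `Q`.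
This is detected by the parity of crossings of the cycle with a vertical ray, which does not change
when the base point of the ray moves inside the complement of `Q`. Adding `c` back to either
component gives two smaller polyominoes whose counts add up to that of `Q` plus one.
-/

theorem CellAdj.symm {p q : ℤ × ℤ} (h : CellAdj p q) : CellAdj q p := by
  unfold CellAdj at *; omega

theorem CellAdj.eq_or_eq_or_eq_or_eq {p q : ℤ × ℤ} (h : CellAdj p q) :
    q = (p.1 + 1, p.2) ∨ q = (p.1 - 1, p.2) ∨ q = (p.1, p.2 + 1) ∨ q = (p.1, p.2 - 1) := by
  obtain ⟨x, y⟩ := p; obtain ⟨u, v⟩ := q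
  unfold CellAdj at h; simp only [Prod.mk.injEq]; omega

namespace Polyomino

open Relation Finset

def Reach (S : Set (ℤ × ℤ)) : ℤ × ℤ → ℤ × ℤ → Prop :=
  ReflTransGen fun a b => CellAdj a b ∧ a ∈ S ∧ b ∈ S

namespace Reach

variable {S T : Set (ℤ × ℤ)} {x y z : ℤ × ℤ}

theorem step (hxy : CellAdj x y) (hx : x ∈ S) (hy : y ∈ S) : Reach S x y :=
  ReflTransGen.single ⟨hxy, hx, hy⟩

theorem trans (h : Reach S x y) (h' : Reach S y z) : Reach S x z :=
  ReflTransGen.trans h h'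

theorem symm (h : Reach S x y) : Reach S y x := by
  induction h with
  | refl => exact ReflTransGen.refl
  | tail _ hab ih => exact ih.head ⟨hab.1.symm, hab.2.2, hab.2.1⟩

theorem mono (hST : S ⊆ T) (h : Reach S x y) : Reach T x y :=
  ReflTransGen.mono (fun _ _ hab => ⟨hab.1, hST hab.2.1, hST hab.2.2⟩) _ _ h

theorem mem (h : Reach S x y) (hx : x ∈ S) : y ∈ S := by
  induction h with
  | refl => exact hx
  | tail _ hab _ => exact hab.2.2

end Reach

theorem connectedCells_of_reach {S T : Set (ℤ × ℤ)} (hS : ConnectedCells S) (hST : S ⊆ T)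
    (h : ∀ x ∈ T, ∃ y ∈ S, Reach T x y) : ConnectedCells T := by
  intro x hx z hz
  obtain ⟨y, hy, hxy⟩ := h x hx
  obtain ⟨y', hy', hzy'⟩ := h z hz
  exact hxy.trans ((Reach.mono hST (hS y hy y' hy')).trans hzy'.symm)

open scoped Classical in
noncomputable def component (S : Finset (ℤ × ℤ)) (a : ℤ × ℤ) : Finset (ℤ × ℤ) :=
  S.filter (Reach S a)

section component

variable {S : Finset (ℤ × ℤ)} {a x y z : ℤ × ℤ}

theorem mem_component : y ∈ component S a ↔ y ∈ S ∧ Reach S a y := by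
  classical exact mem_filter

theorem self_mem_component (ha : a ∈ S) : a ∈ component S a :=
  mem_component.2 ⟨ha, ReflTransGen.refl⟩

theorem component_subset : component S a ⊆ S := fun _ hy => (mem_component.1 hy).1

theorem mem_of_mem_component (hy : y ∈ component S a) : a ∈ S :=
  (mem_component.1 hy).2.symm.mem (mem_component.1 hy).1

theorem mem_component_of_adj (hy : y ∈ component S a) (hz : z ∈ S) (hyz : CellAdj y z) :
    z ∈ component S a := by
  obtain ⟨hyS, hay⟩ := mem_component.1 hy
  exact mem_component.2 ⟨hz, hay.trans (Reach.step hyz hyS hz)⟩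

theorem reach_component (hy : y ∈ component S a) : Reach (component S a) a y := by
  obtain ⟨-, h⟩ := mem_component.1 hy
  clear hy
  induction h with
  | refl => exact ReflTransGen.refl
  | tail hab hbc ih =>
    exact ih.trans (Reach.step hbc.1 (mem_component.2 ⟨hbc.2.1, hab⟩)
      (mem_component.2 ⟨hbc.2.2, ReflTransGen.tail hab hbc⟩))

theorem Reach.sdiff_component (hxS : x ∈ S) (hx : x ∉ component S a) (h : Reach S x y) :
    Reach (↑S \ ↑(component S a)) x y := by
  have hout : ∀ {b}, Reach S x b → b ∉ component S a := fun hxb hb =>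
    hx (mem_component.2 ⟨hxS, (mem_component.1 hb).2.trans hxb.symm⟩)
  induction h with
  | refl => exact ReflTransGen.refl
  | tail hxb hbc ih =>
    exact ih.trans (Reach.step hbc.1 ⟨hbc.2.1, hout hxb⟩
      ⟨hbc.2.2, hout (ReflTransGen.tail hxb hbc)⟩)

theorem exists_adj_reach_erase {c : ℤ × ℤ} (hx : x ∈ S.erase c) (h : Reach S x c) :
    ∃ n ∈ S.erase c, CellAdj n c ∧ Reach (S.erase c) x n := by
  suffices ∀ y, Reach S x y →
      Reach (S.erase c) x y ∨ ∃ n ∈ S.erase c, CellAdj n c ∧ Reach (S.erase c) x n by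
    refine (this c h).resolve_left fun hxc => ?_
    simpa using hxc.mem hx
  intro y hy
  induction hy with
  | refl => exact Or.inl ReflTransGen.refl
  | @tail b d _ hbd ih =>
    refine ih.elim (fun hxb => ?_) Or.inr
    have hb : b ∈ S.erase c := hxb.mem hx
    by_cases hd : d = c
    · subst hd; exact Or.inr ⟨b, hb, hbd.1, hxb⟩
    · exact Or.inl (hxb.trans (Reach.step hbd.1 hb (mem_erase.2 ⟨hd, hbd.2.2⟩)))

end component

theorem insert_component_subset {Q : Finset (ℤ × ℤ)} {a c : ℤ × ℤ} (hc : c ∈ Q) :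
    insert c (component (Q.erase c) a) ⊆ Q :=
  insert_subset hc (component_subset.trans (erase_subset c Q))

theorem insert_component_ssubset {Q : Finset (ℤ × ℤ)} {a b c : ℤ × ℤ} (hc : c ∈ Q)
    (hb : b ∈ Q.erase c) (hba : b ∉ component (Q.erase c) a) :
    insert c (component (Q.erase c) a) ⊂ Q :=
  (ssubset_iff_of_subset (insert_component_subset hc)).2
    ⟨b, mem_of_mem_erase hb, fun h => (mem_insert.1 h).elim (ne_of_mem_erase hb) hba⟩

theorem isPolyomino_insert_component {Q : Finset (ℤ × ℤ)} {a c m t : ℤ × ℤ}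
    (hQ : IsPolyomino Q) (hc : c ∈ Q) (ha : a ∈ Q.erase c) (hac : CellAdj a c)
    (hm : m ∈ Q.erase c) (hmA : m ∉ component (Q.erase c) a)
    (hreach : ∀ x ∈ Q.erase c, x ∉ component (Q.erase c) a → Reach (Q.erase c) x m)
    (ht : t ∉ Q) (hmt : CellAdj m t) :
    IsPolyomino (insert c (component (Q.erase c) a)) := by
  set A := component (Q.erase c) a
  have hsub : insert c A ⊆ Q := insert_component_subset hc
  refine ⟨insert_nonempty c A, ?_, ?_⟩
  · refine connectedCells_of_reach (S := {c}) (by rintro _ rfl _ rfl; exact ReflTransGen.refl)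
      (by simp) fun x hx => ⟨c, rfl, ?_⟩
    rcases mem_insert.1 hx with rfl | hxA
    · exact ReflTransGen.refl
    · exact ((reach_component hxA).symm.mono (coe_subset.2 (subset_insert c A))).trans
        (Reach.step hac (mem_insert_of_mem (self_mem_component ha)) (mem_insert_self c A))
  · have hout : ∀ {z}, z ∈ Q.erase c → z ∉ A →
        z ∈ (↑(insert c A) : Set (ℤ × ℤ))ᶜ :=
      fun hz hzA h => (mem_insert.1 h).elim (ne_of_mem_erase hz) hzA
    refine connectedCells_of_reach hQ.2.2 (fun z hz h => hz (hsub h)) fun x hx => ?_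
    by_cases hxQ : x ∈ Q
    · have hxc : x ≠ c := fun h => hx (by simp [h])
      have hxA : x ∉ A := fun h => hx (mem_insert_of_mem h)
      have hxm := (hreach x (mem_erase.2 ⟨hxc, hxQ⟩) hxA).sdiff_component
        (mem_erase.2 ⟨hxc, hxQ⟩) hxA
      refine ⟨t, ht, (hxm.mono fun z hz => hout hz.1 hz.2).trans
        (Reach.step hmt (hout hm hmA) fun h => ht (hsub h))⟩
    · exact ⟨x, hxQ, ReflTransGen.refl⟩

/-- Parity of crossings of the step between the centres of `u` and `v` with the upward vertical
ray from the top right corner of the cell `p`. -/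
def rayCrossing (p u v : ℤ × ℤ) : ZMod 2 :=
  if u.2 = v.2 ∧ p.2 < u.2 ∧ (u.1 = p.1 ∧ v.1 = p.1 + 1 ∨ u.1 = p.1 + 1 ∧ v.1 = p.1)
  then 1 else 0

def RaysCohomologous (S : Set (ℤ × ℤ)) (p q : ℤ × ℤ) : Prop :=
  ∃ g : ℤ × ℤ → ZMod 2, ∀ u ∈ S, ∀ v ∈ S, CellAdj u v →
    rayCrossing p u v + rayCrossing q u v = g u + g v

namespace RaysCohomologous

variable {S : Set (ℤ × ℤ)} {p q r : ℤ × ℤ}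

theorem refl : RaysCohomologous S p p :=
  ⟨0, fun _ _ _ _ _ => by simp [CharTwo.add_self_eq_zero]⟩

theorem symm (h : RaysCohomologous S p q) : RaysCohomologous S q p := by
  obtain ⟨g, hg⟩ := h
  exact ⟨g, fun u hu v hv huv => by rw [add_comm, hg u hu v hv huv]⟩

theorem trans (h : RaysCohomologous S p q) (h' : RaysCohomologous S q r) :
    RaysCohomologous S p r := by
  obtain ⟨g, hg⟩ := h
  obtain ⟨g', hg'⟩ := h'
  refine ⟨g + g', fun u hu v hv huv => ?_⟩
  have := hg u hu v hv huv
  have := hg' u hu v hv huv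
  simp only [Pi.add_apply]
  grind

theorem up (hq : (p.1, p.2 + 1) ∉ S) : RaysCohomologous S p (p.1, p.2 + 1) := by
  refine ⟨0, fun u hu v hv huv => ?_⟩
  have hu' := ne_of_mem_of_not_mem hu hq
  have hv' := ne_of_mem_of_not_mem hv hq
  obtain ⟨u1, u2⟩ := u; obtain ⟨v1, v2⟩ := v
  simp only [ne_eq, Prod.mk.injEq] at hu' hv'
  unfold CellAdj at huv
  simp only [rayCrossing, Pi.zero_apply]
  split_ifs <;> first | rfl | omega

/-- Moving the ray one column to the right changes the crossing count of a step by the change of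
the indicator of the half column above `p`. -/
theorem right (hq : (p.1 + 1, p.2) ∉ S) : RaysCohomologous S p (p.1 + 1, p.2) := by
  refine ⟨fun z => if z.1 = p.1 + 1 ∧ p.2 < z.2 then 1 else 0, fun u hu v hv huv => ?_⟩
  have hu' := ne_of_mem_of_not_mem hu hq
  have hv' := ne_of_mem_of_not_mem hv hq
  obtain ⟨u1, u2⟩ := u; obtain ⟨v1, v2⟩ := v
  simp only [ne_eq, Prod.mk.injEq] at hu' hv'
  unfold CellAdj at huv
  simp only [rayCrossing]
  split_ifs <;> first | rfl | decide | omega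

theorem of_adj (hp : p ∉ S) (hq : q ∉ S) (h : CellAdj p q) : RaysCohomologous S p q := by
  rcases h.eq_or_eq_or_eq_or_eq with rfl | rfl | rfl | rfl
  · exact right hq
  · simpa using (right (p := (p.1 - 1, p.2)) (by simpa using hp)).symm
  · exact up hq
  · simpa using (up (p := (p.1, p.2 - 1)) (by simpa using hp)).symm

theorem of_reach (h : Reach Sᶜ p q) : RaysCohomologous S p q := by
  induction h with
  | refl => exact refl
  | tail _ hab ih => exact ih.trans (of_adj hab.2.1 hab.2.2 hab.1)

end RaysCohomologous

/-- The number of interior vertices of `scale2 Q` in the `2 × 2` block replacing the cell `p`: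
its centre, the midpoints of its lower and left sides, and its lower left corner. -/
def blockCount (Q : Finset (ℤ × ℤ)) (p : ℤ × ℤ) : ℕ :=
  1 + (if (p.1, p.2 - 1) ∈ Q then 1 else 0) + (if (p.1 - 1, p.2) ∈ Q then 1 else 0) +
    (if (p.1, p.2 - 1) ∈ Q ∧ (p.1 - 1, p.2) ∈ Q ∧ (p.1 - 1, p.2 - 1) ∈ Q then 1 else 0)

def blockSum (Q : Finset (ℤ × ℤ)) : ℕ := ∑ p ∈ Q, blockCount Q p

theorem mem_scale2 {Q : Finset (ℤ × ℤ)} {v : ℤ × ℤ} :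
    v ∈ scale2 Q ↔ (v.1 / 2, v.2 / 2) ∈ Q := by
  obtain ⟨x, y⟩ := v
  simp only [scale2, mem_biUnion, mem_insert, mem_singleton, Prod.mk.injEq]
  constructor
  · rintro ⟨p, hp, h⟩
    convert hp using 1
    ext <;> simp only <;> omega
  · exact fun h => ⟨_, h, by omega⟩

theorem card_interiorVertices_scale2 (Q : Finset (ℤ × ℤ)) :
    #(interiorVertices (scale2 Q)) = blockSum Q := by
  have hblock : ∀ v ∈ interiorVertices (scale2 Q), (v.1 / 2, v.2 / 2) ∈ Q :=
    fun v hv => mem_scale2.1 (mem_filter.1 hv).1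
  rw [card_eq_sum_card_fiberwise hblock]
  refine sum_congr rfl fun ⟨a, b⟩ hp => ?_
  have hfiber : (interiorVertices (scale2 Q)).filter (fun v => (v.1 / 2, v.2 / 2) = (a, b)) =
      ({(2 * a + 1, 2 * b + 1), (2 * a + 1, 2 * b), (2 * a, 2 * b + 1), (2 * a, 2 * b)} :
        Finset (ℤ × ℤ)).filter (· ∈ interiorVertices (scale2 Q)) := by
    ext ⟨x, y⟩
    simp only [mem_filter, mem_insert, mem_singleton, Prod.mk.injEq]
    constructor
    · rintro ⟨h, h'⟩; exact ⟨by omega, h⟩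
    · rintro ⟨h, h'⟩; exact ⟨h', by omega⟩
  have h1 : (2 * a + 1) / 2 = a := by omega
  have h2 : (2 * a) / 2 = a := by omega
  have h3 : (2 * a - 1) / 2 = a - 1 := by omega
  have h4 : (2 * b + 1) / 2 = b := by omega
  have h5 : (2 * b) / 2 = b := by omega
  have h6 : (2 * b - 1) / 2 = b - 1 := by omega
  rw [hfiber, card_filter, sum_insert (by simp), sum_insert (by simp), sum_insert (by simp),
    sum_singleton]
  simp only [interiorVertices, mem_filter, mem_scale2, add_sub_cancel_right, h1, h2, h3, h4, h5,
    h6, blockCount, hp, true_and]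
  by_cases hD : (a, b - 1) ∈ Q <;> by_cases hL : (a - 1, b) ∈ Q <;>
    by_cases hDL : (a - 1, b - 1) ∈ Q <;> simp [hD, hL, hDL]

theorem blockCount_congr {Q Q' : Finset (ℤ × ℤ)} {p : ℤ × ℤ}
    (hD : (p.1, p.2 - 1) ∈ Q ↔ (p.1, p.2 - 1) ∈ Q')
    (hL : (p.1 - 1, p.2) ∈ Q ↔ (p.1 - 1, p.2) ∈ Q')
    (hDL : (p.1, p.2 - 1) ∈ Q → ((p.1 - 1, p.2 - 1) ∈ Q ↔ (p.1 - 1, p.2 - 1) ∈ Q')) :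
    blockCount Q p = blockCount Q' p := by
  unfold blockCount
  by_cases h : (p.1, p.2 - 1) ∈ Q
  · simp [← hD, ← hL, h, hDL h]
  · simp [← hD, ← hL, h]

def IsLexMax (Q : Finset (ℤ × ℤ)) (c : ℤ × ℤ) : Prop :=
  c ∈ Q ∧ ∀ q ∈ Q, q.1 < c.1 ∨ q.1 = c.1 ∧ q.2 ≤ c.2

theorem exists_isLexMax {Q : Finset (ℤ × ℤ)} (hQ : Q.Nonempty) : ∃ c, IsLexMax Q c := by
  obtain ⟨c, hc, h⟩ := Q.exists_max_image toLex hQ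
  exact ⟨c, hc, fun q hq => Prod.Lex.toLex_le_toLex.1 (h q hq)⟩

namespace IsLexMax

variable {Q : Finset (ℤ × ℤ)} {c : ℤ × ℤ}

theorem notMem (hc : IsLexMax Q c) {z : ℤ × ℤ} (hz : c.1 < z.1 ∨ z.1 = c.1 ∧ c.2 < z.2) :
    z ∉ Q := fun h => by have := hc.2 z h; omega

theorem eq_left_or_eq_down (hc : IsLexMax Q c) {n : ℤ × ℤ} (hn : n ∈ Q) (h : CellAdj n c) :
    n = (c.1 - 1, c.2) ∨ n = (c.1, c.2 - 1) := by
  have := hc.2 n hn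
  obtain ⟨x, y⟩ := n
  simp only [CellAdj, Prod.mk.injEq] at *
  omega

theorem blockSum_eq_blockSum_erase_add (hc : IsLexMax Q c) :
    blockSum Q = blockSum (Q.erase c) + blockCount Q c := by
  rw [blockSum, ← sum_erase_add _ _ hc.1, blockSum]
  congr 1
  refine sum_congr rfl fun p hp => ?_
  have hpc := hc.2 p (mem_of_mem_erase hp)
  -- the cells that `blockCount _ p` looks at precede `p`, hence `c`, lexicographically
  have hpre : ∀ z : ℤ × ℤ, z.1 < p.1 ∨ z.1 = p.1 ∧ z.2 < p.2 →
      (z ∈ Q ↔ z ∈ Q.erase c) :=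
    fun z hz => ⟨fun h => mem_erase.2 ⟨by rintro rfl; omega, h⟩, mem_of_mem_erase⟩
  exact blockCount_congr (hpre _ (by omega)) (hpre _ (by omega)) fun _ => hpre _ (by omega)

theorem isPolyomino_erase (hQ : IsPolyomino Q) (hc : IsLexMax Q c) (hne : (Q.erase c).Nonempty)
    (hLD : (c.1 - 1, c.2) ∈ Q → (c.1, c.2 - 1) ∈ Q →
      Reach (Q.erase c) (c.1 - 1, c.2) (c.1, c.2 - 1)) :
    IsPolyomino (Q.erase c) := by
  refine ⟨hne, fun x hx y hy => ?_, ?_⟩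
  · obtain ⟨n, hn, hnc, hxn⟩ :=
      exists_adj_reach_erase hx (hQ.2.1 x (mem_of_mem_erase hx) c hc.1)
    obtain ⟨n', hn', hnc', hyn'⟩ :=
      exists_adj_reach_erase hy (hQ.2.1 y (mem_of_mem_erase hy) c hc.1)
    refine hxn.trans (Reach.trans ?_ hyn'.symm)
    rcases hc.eq_left_or_eq_down (mem_of_mem_erase hn) hnc with rfl | rfl <;>
      rcases hc.eq_left_or_eq_down (mem_of_mem_erase hn') hnc' with rfl | rfl
    exacts [ReflTransGen.refl, hLD (mem_of_mem_erase hn) (mem_of_mem_erase hn'),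
      (hLD (mem_of_mem_erase hn') (mem_of_mem_erase hn)).symm, ReflTransGen.refl]
  · have hR : (c.1 + 1, c.2) ∉ Q := hc.notMem (by omega)
    refine connectedCells_of_reach hQ.2.2 (fun z hz h => hz (mem_of_mem_erase h)) fun x hx => ?_
    by_cases hxQ : x ∈ Q
    · obtain rfl : x = c := by by_contra h; exact hx (mem_erase.2 ⟨h, hxQ⟩)
      refine ⟨_, hR, Reach.step (by unfold CellAdj; omega) hx fun h => hR (mem_of_mem_erase h)⟩
    · exact ⟨x, hxQ, ReflTransGen.refl⟩

theorem not_reach_left_down (hc : IsLexMax Q c)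
    (hcompl : ConnectedCells (↑Q : Set (ℤ × ℤ))ᶜ)
    (hL : (c.1 - 1, c.2) ∈ Q) (hD : (c.1, c.2 - 1) ∈ Q) (hDL : (c.1 - 1, c.2 - 1) ∉ Q) :
    ¬ Reach (Q.erase c) (c.1 - 1, c.2) (c.1, c.2 - 1) := by
  have hR : (c.1 + 1, c.2) ∉ Q := hc.notMem (by omega)
  obtain ⟨g, hg⟩ := RaysCohomologous.of_reach (hcompl _ hDL _ hR)
  -- no step inside `Q` crosses the ray from `(c.1 + 1, c.2)`, and the only one crossing the ray
  -- from `(c.1 - 1, c.2 - 1)` is the step between `(c.1 - 1, c.2)` and `c`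
  have hcross : ∀ u ∈ Q, ∀ v ∈ Q, CellAdj u v →
      rayCrossing (c.1 - 1, c.2 - 1) u v = g u + g v := by
    intro u hu v hv huv
    have hRu : rayCrossing (c.1 + 1, c.2) u v = 0 := by
      have := hc.2 u hu; have := hc.2 v hv
      simp only [rayCrossing, ite_eq_right_iff]; omega
    rw [← hg u hu v hv huv, hRu, add_zero]
  have hLc : g (c.1 - 1, c.2) + g c = 1 := by
    rw [← hcross _ hL _ hc.1 (by unfold CellAdj; omega)]
    simp [rayCrossing]
  have hDc : g (c.1, c.2 - 1) + g c = 0 := by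
    rw [← hcross _ hD _ hc.1 (by unfold CellAdj; omega)]
    simp [rayCrossing]
  have hconst : ∀ x, Reach (Q.erase c) (c.1 - 1, c.2) x → g x = g (c.1 - 1, c.2) := by
    intro x hx
    induction hx with
    | refl => rfl
    | @tail y z _ hyz ih =>
      obtain ⟨hyz, hy, hz⟩ := hyz
      have hy' := ne_of_mem_erase hy; have hz' := ne_of_mem_erase hz
      have := hc.2 y (mem_of_mem_erase hy); have := hc.2 z (mem_of_mem_erase hz)
      have hzero : rayCrossing (c.1 - 1, c.2 - 1) y z = 0 := by
        obtain ⟨y1, y2⟩ := y; obtain ⟨z1, z2⟩ := z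
        simp only [ne_eq, Prod.ext_iff, rayCrossing, ite_eq_right_iff] at *
        omega
      rw [← ih]
      have := hcross y (mem_of_mem_erase hy) z (mem_of_mem_erase hz) hyz
      grind
  intro h
  rw [hconst _ h, hLc] at hDc
  exact one_ne_zero hDc

theorem blockCount_insert_component (hc : IsLexMax Q c) {a p : ℤ × ℤ}
    (hp : p ∈ component (Q.erase c) a) :
    blockCount (insert c (component (Q.erase c) a)) p = blockCount Q p := by
  have hmem : ∀ {y z}, y ∈ component (Q.erase c) a → z ≠ c → CellAdj y z →
      (z ∈ insert c (component (Q.erase c) a) ↔ z ∈ Q) := fun hy hzc hyz =>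
    ⟨(insert_component_subset hc.1 ·),
      fun hz => mem_insert_of_mem (mem_component_of_adj hy (mem_erase.2 ⟨hzc, hz⟩) hyz)⟩
  have hpc := hc.2 p (mem_of_mem_erase (component_subset hp))
  have hDc : (p.1, p.2 - 1) ≠ c := fun h => by simp only [Prod.ext_iff] at h; omega
  have hLc : (p.1 - 1, p.2) ≠ c := fun h => by simp only [Prod.ext_iff] at h; omega
  have hDLc : (p.1 - 1, p.2 - 1) ≠ c := fun h => by simp only [Prod.ext_iff] at h; omega
  refine blockCount_congr (hmem hp hDc (by unfold CellAdj; omega))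
    (hmem hp hLc (by unfold CellAdj; omega)) fun hD => ?_
  have hDA : (p.1, p.2 - 1) ∈ component (Q.erase c) a :=
    mem_component_of_adj hp (mem_erase.2 ⟨hDc, insert_component_subset hc.1 hD⟩)
      (by unfold CellAdj; omega)
  exact hmem hDA hDLc (by unfold CellAdj; omega)

theorem blockSum_insert_component (hc : IsLexMax Q c) (a : ℤ × ℤ) :
    blockSum (insert c (component (Q.erase c) a)) =
      blockCount (insert c (component (Q.erase c) a)) c +
        ∑ p ∈ component (Q.erase c) a, blockCount Q p := by
  rw [blockSum, sum_insert fun h => ne_of_mem_erase (component_subset h) rfl,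
    sum_congr rfl fun p hp => hc.blockCount_insert_component hp]

theorem mem_component_left_or_down (hc : IsLexMax Q c)
    (hconn : ConnectedCells (↑Q : Set (ℤ × ℤ)))
    {x : ℤ × ℤ} (hx : x ∈ Q.erase c) :
    x ∈ component (Q.erase c) (c.1 - 1, c.2) ∨ x ∈ component (Q.erase c) (c.1, c.2 - 1) := by
  obtain ⟨n, hn, hnc, hxn⟩ := exists_adj_reach_erase hx (hconn x (mem_of_mem_erase hx) c hc.1)
  rcases hc.eq_left_or_eq_down (mem_of_mem_erase hn) hnc with rfl | rfl
  exacts [Or.inl (mem_component.2 ⟨hx, hxn.symm⟩), Or.inr (mem_component.2 ⟨hx, hxn.symm⟩)]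

theorem disjoint_component_left_down (hQ : IsPolyomino Q) (hc : IsLexMax Q c)
    (hL : (c.1 - 1, c.2) ∈ Q) (hD : (c.1, c.2 - 1) ∈ Q) (hDL : (c.1 - 1, c.2 - 1) ∉ Q) :
    Disjoint (component (Q.erase c) (c.1 - 1, c.2)) (component (Q.erase c) (c.1, c.2 - 1)) :=
  disjoint_left.2 fun _ hxL hxD => hc.not_reach_left_down hQ.2.2 hL hD hDL
    ((mem_component.1 hxL).2.trans (mem_component.1 hxD).2.symm)

theorem isPolyomino_insert_component_left (hQ : IsPolyomino Q) (hc : IsLexMax Q c)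
    (hL : (c.1 - 1, c.2) ∈ Q) (hD : (c.1, c.2 - 1) ∈ Q) (hDL : (c.1 - 1, c.2 - 1) ∉ Q) :
    IsPolyomino (insert c (component (Q.erase c) (c.1 - 1, c.2))) := by
  have hD' : (c.1, c.2 - 1) ∈ Q.erase c := mem_erase.2 ⟨by simp [Prod.ext_iff], hD⟩
  refine isPolyomino_insert_component hQ hc.1 (mem_erase.2 ⟨by simp [Prod.ext_iff], hL⟩)
    (by unfold CellAdj; omega) hD'
    (disjoint_right.1 (disjoint_component_left_down hQ hc hL hD hDL) (self_mem_component hD'))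
    (fun x hx hxL => ?_) (hc.notMem (z := (c.1 + 1, c.2 - 1)) (by omega))
    (by unfold CellAdj; omega)
  exact (mem_component.1 ((hc.mem_component_left_or_down hQ.2.1 hx).resolve_left hxL)).2.symm

theorem isPolyomino_insert_component_down (hQ : IsPolyomino Q) (hc : IsLexMax Q c)
    (hL : (c.1 - 1, c.2) ∈ Q) (hD : (c.1, c.2 - 1) ∈ Q) (hDL : (c.1 - 1, c.2 - 1) ∉ Q) :
    IsPolyomino (insert c (component (Q.erase c) (c.1, c.2 - 1))) := by
  have hdisj := disjoint_component_left_down hQ hc hL hD hDL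
  have hL' : (c.1 - 1, c.2) ∈ Q.erase c := mem_erase.2 ⟨by simp [Prod.ext_iff], hL⟩
  have hD' : (c.1, c.2 - 1) ∈ Q.erase c := mem_erase.2 ⟨by simp [Prod.ext_iff], hD⟩
  -- the complement of the new polyomino reaches `Qᶜ` above the highest cell of the other part
  obtain ⟨m, hmL, hmtop⟩ :=
    (component (Q.erase c) (c.1 - 1, c.2)).exists_max_image (·.2) ⟨_, self_mem_component hL'⟩
  have hmt : (m.1, m.2 + 1) ∉ Q := fun ht => by
    have htc : (m.1, m.2 + 1) ≠ c := fun h => disjoint_left.1 hdisj hmL (by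
      convert self_mem_component hD' using 1; simp only [Prod.ext_iff] at h ⊢; omega)
    have := hmtop _
      (mem_component_of_adj hmL (mem_erase.2 ⟨htc, ht⟩) (by unfold CellAdj; omega))
    omega
  refine isPolyomino_insert_component hQ hc.1 hD' (by unfold CellAdj; omega)
    (component_subset hmL) (disjoint_left.1 hdisj hmL) (fun x hx hxD => ?_) hmt
    (by unfold CellAdj; omega)
  exact (mem_component.1 ((hc.mem_component_left_or_down hQ.2.1 hx).resolve_right hxD)).2.symm.trans
    (mem_component.1 hmL).2

theorem blockSum_add_one_eq (hQ : IsPolyomino Q) (hc : IsLexMax Q c)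
    (hL : (c.1 - 1, c.2) ∈ Q) (hD : (c.1, c.2 - 1) ∈ Q) (hDL : (c.1 - 1, c.2 - 1) ∉ Q) :
    blockSum Q + 1 = blockSum (insert c (component (Q.erase c) (c.1 - 1, c.2))) +
      blockSum (insert c (component (Q.erase c) (c.1, c.2 - 1))) := by
  have hdisj := disjoint_component_left_down hQ hc hL hD hDL
  have hL' : (c.1 - 1, c.2) ∈ Q.erase c := mem_erase.2 ⟨by simp [Prod.ext_iff], hL⟩
  have hD' : (c.1, c.2 - 1) ∈ Q.erase c := mem_erase.2 ⟨by simp [Prod.ext_iff], hD⟩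
  have hcover : Q.erase c = component (Q.erase c) (c.1 - 1, c.2) ∪
      component (Q.erase c) (c.1, c.2 - 1) :=
    Subset.antisymm (fun x hx => mem_union.2 (hc.mem_component_left_or_down hQ.2.1 hx))
      (union_subset component_subset component_subset)
  have hDL' : (c.1, c.2 - 1) ∉ insert c (component (Q.erase c) (c.1 - 1, c.2)) := fun h =>
    (mem_insert.1 h).elim (ne_of_mem_erase hD')
      (disjoint_right.1 hdisj (self_mem_component hD'))
  have hLD' : (c.1 - 1, c.2) ∉ insert c (component (Q.erase c) (c.1, c.2 - 1)) := fun h =>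
    (mem_insert.1 h).elim (ne_of_mem_erase hL') (disjoint_left.1 hdisj (self_mem_component hL'))
  have hsplit : ∑ p ∈ Q.erase c, blockCount Q p =
      ∑ p ∈ component (Q.erase c) (c.1 - 1, c.2), blockCount Q p +
        ∑ p ∈ component (Q.erase c) (c.1, c.2 - 1), blockCount Q p := by
    rw [← sum_union hdisj, ← hcover]
  have hcQ : blockCount Q c = 3 := by simp [blockCount, hL, hD, hDL]
  have hcL : blockCount (insert c (component (Q.erase c) (c.1 - 1, c.2))) c = 2 := by
    simp [blockCount, hDL', self_mem_component hL']
  have hcD : blockCount (insert c (component (Q.erase c) (c.1, c.2 - 1))) c = 2 := by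
    simp [blockCount, hLD', self_mem_component hD']
  rw [hc.blockSum_insert_component, hc.blockSum_insert_component, blockSum,
    ← sum_erase_add _ _ hc.1, hsplit, hcQ, hcL, hcD]
  ring

theorem odd_blockSum_of_split (hQ : IsPolyomino Q) (hc : IsLexMax Q c)
    (hL : (c.1 - 1, c.2) ∈ Q) (hD : (c.1, c.2 - 1) ∈ Q) (hDL : (c.1 - 1, c.2 - 1) ∉ Q)
    (ih : ∀ Q' ⊂ Q, IsPolyomino Q' → Odd (blockSum Q')) :
    Odd (blockSum Q) := by
  have hdisj := disjoint_component_left_down hQ hc hL hD hDL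
  have hL' : (c.1 - 1, c.2) ∈ Q.erase c := mem_erase.2 ⟨by simp [Prod.ext_iff], hL⟩
  have hD' : (c.1, c.2 - 1) ∈ Q.erase c := mem_erase.2 ⟨by simp [Prod.ext_iff], hD⟩
  have hoddL := ih _ (insert_component_ssubset hc.1 hD'
    (disjoint_right.1 hdisj (self_mem_component hD')))
    (isPolyomino_insert_component_left hQ hc hL hD hDL)
  have hoddD := ih _ (insert_component_ssubset hc.1 hL'
    (disjoint_left.1 hdisj (self_mem_component hL')))
    (isPolyomino_insert_component_down hQ hc hL hD hDL)
  have hsum := blockSum_add_one_eq hQ hc hL hD hDL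
  rw [Nat.odd_iff] at hoddL hoddD ⊢
  omega

end IsLexMax

theorem odd_blockSum {Q : Finset (ℤ × ℤ)} (hQ : IsPolyomino Q) : Odd (blockSum Q) := by
  induction Q using Finset.strongInduction with
  | H Q ih =>
  obtain ⟨c, hc⟩ := exists_isLexMax hQ.1
  by_cases hsplit : (c.1 - 1, c.2) ∈ Q ∧ (c.1, c.2 - 1) ∈ Q ∧ (c.1 - 1, c.2 - 1) ∉ Q
  · exact hc.odd_blockSum_of_split hQ hsplit.1 hsplit.2.1 hsplit.2.2 ih
  have hLc : (c.1 - 1, c.2) ≠ c := by simp [Prod.ext_iff]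
  have hDc : (c.1, c.2 - 1) ≠ c := by simp [Prod.ext_iff]
  rcases (Q.erase c).eq_empty_or_nonempty with he | ⟨x, hx⟩
  · obtain rfl : Q = {c} := (erase_eq_empty_iff Q c).1 he |>.resolve_left hQ.1.ne_empty
    simp [blockSum, blockCount, hLc, hDc]
  have hLD : (c.1 - 1, c.2) ∈ Q → (c.1, c.2 - 1) ∈ Q →
      Reach (Q.erase c) (c.1 - 1, c.2) (c.1, c.2 - 1) := fun hL hD => by
    have hDL : (c.1 - 1, c.2 - 1) ∈ Q.erase c :=
      mem_erase.2 ⟨by simp [Prod.ext_iff], by tauto⟩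
    exact (Reach.step (by unfold CellAdj; omega) (mem_erase.2 ⟨hLc, hL⟩) hDL).trans
      (Reach.step (by unfold CellAdj; omega) hDL (mem_erase.2 ⟨hDc, hD⟩))
  have hodd := ih _ (erase_ssubset hc.1) (hc.isPolyomino_erase hQ ⟨x, hx⟩ hLD)
  have hnbr : (c.1 - 1, c.2) ∈ Q ∨ (c.1, c.2 - 1) ∈ Q :=
    (hc.mem_component_left_or_down hQ.2.1 hx).imp (mem_of_mem_erase <| mem_of_mem_component ·)
      (mem_of_mem_erase <| mem_of_mem_component ·)
  have heven : Even (blockCount Q c) := by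
    by_cases hL : (c.1 - 1, c.2) ∈ Q <;> by_cases hD : (c.1, c.2 - 1) ∈ Q <;>
      simp_all [blockCount, Nat.even_iff]
  rw [hc.blockSum_eq_blockSum_erase_add]
  exact hodd.add_even heven

end Polyomino

/-- every `2×2`-polyomino has an odd number of interior vertices. -/
theorem stmt3 (Q : Finset (ℤ × ℤ)) (hQ : IsPolyomino Q) :
    Odd (interiorVertices (scale2 Q)).card := by
  rw [Polyomino.card_interiorVertices_scale2]
  exact Polyomino.odd_blockSum hQ
end

section
/- For n ≥ 1, m ≥ 2, and 1 ≤ r ≤ m, the re-representation of the quadriculated torus satisfies T*(n,m,r) = T(gcd(r,m), mn/gcd(r,m), (m/gcd(r,m) − k)·n), where k is the unique integer with 0 ≤ k ≤ m/gcd(r,m) − 1 satisfying gcd(r,m) ≡ rk (mod m). Furthermore, applying the operation twice returns the original torus: T**(n,m,r) = T(n,m,r). -/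
open SimpleGraph

variable {V : Type*}

/-- The quadriculated torus `T(N,M,r)`: vertices `(i,j)` with `i ∈ Z_N`, `j ∈ Z_M`,
horizontal edges `(i,j)(i,j+1)`, vertical edges `(i,j)(i+1,j)` for `i ≠ N-1`, and
wrap-around vertical edges joining row `N-1` to row `0` with a torsion of `r`:
`v_{0,j}` is adjacent to `v_{N-1,(M-r+j) mod M}`. -/
def torus (N M r : ℕ) : SimpleGraph (ZMod N × ZMod M) :=
  SimpleGraph.fromRel (fun u v =>
    (u.1 = v.1 ∧ v.2 = u.2 + 1) ∨
    (u.1 ≠ -1 ∧ v.1 = u.1 + 1 ∧ v.2 = u.2) ∨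
    (u.1 = -1 ∧ v.1 = u.1 + 1 ∧ v.2 = u.2 + (r : ZMod M)))

namespace Stmt7Aux

/-- Covering map from ℤ² to the vertex set of `torus N M R`. -/
def piT (N M R : ℕ) (x : ℤ × ℤ) : ZMod N × ZMod M :=
  ((x.1 : ZMod N), ((x.2 + (R : ℤ) * (x.1 / (N : ℤ)) : ℤ) : ZMod M))

/-- The lattice of deck transformations of `torus N M R`. -/
def InLat (N M R : ℕ) (x : ℤ × ℤ) : Prop :=
  ∃ a b : ℤ, x.1 = a * N ∧ x.2 = b * M - a * R

lemma piT_eq_iff {N M R : ℕ} (hN : 0 < N) {x y : ℤ × ℤ} :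
    piT N M R x = piT N M R y ↔ InLat N M R (x - y) := by
  have hN0 : (N : ℤ) ≠ 0 := by exact_mod_cast hN.ne'
  simp only [InLat, piT, Prod.fst_sub, Prod.snd_sub, Prod.mk.injEq, Prod.ext_iff]
  constructor
  · rintro ⟨h1, h2⟩
    rw [ZMod.intCast_eq_intCast_iff, Int.modEq_iff_dvd] at h1
    obtain ⟨a, ha⟩ := h1
    have hx1 : x.1 = y.1 + (-a) * N := by linarith
    have hdiv : x.1 / (N : ℤ) = y.1 / N + (-a) := by
      rw [hx1, Int.add_mul_ediv_right _ _ hN0]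
    rw [ZMod.intCast_eq_intCast_iff, Int.modEq_iff_dvd] at h2
    obtain ⟨b, hb⟩ := h2
    rw [hdiv] at hb
    refine ⟨-a, -b, by linarith, by push_cast at hb ⊢; linarith⟩
  · rintro ⟨a, b, h1, h2⟩
    have hx1 : x.1 = y.1 + a * N := by linarith
    have hdiv : x.1 / (N : ℤ) = y.1 / N + a := by
      rw [hx1, Int.add_mul_ediv_right _ _ hN0]
    constructor
    · rw [ZMod.intCast_eq_intCast_iff, Int.modEq_iff_dvd]
      exact ⟨-a, by linarith⟩
    · rw [ZMod.intCast_eq_intCast_iff, Int.modEq_iff_dvd]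
      exact ⟨-b, by rw [hdiv]; push_cast; linarith⟩

lemma piT_section {N M R : ℕ} (hN : 0 < N) (hM : 0 < M) (u : ZMod N × ZMod M) :
    piT N M R ((u.1.val : ℤ), (u.2.val : ℤ)) = u := by
  haveI : NeZero N := ⟨hN.ne'⟩
  haveI : NeZero M := ⟨hM.ne'⟩
  have hdiv : ((u.1.val : ℤ)) / (N : ℤ) = 0 := by
    apply Int.ediv_eq_zero_of_lt (by positivity)
    exact_mod_cast u.1.val_lt
  simp only [piT, hdiv, mul_zero, add_zero]
  refine Prod.ext ?_ ?_
  · push_cast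
    simp [ZMod.natCast_val, ZMod.cast_id]
  · push_cast
    simp [ZMod.natCast_val, ZMod.cast_id]

lemma piT_horiz {N M R : ℕ} (x : ℤ × ℤ) :
    piT N M R (x + (0, 1)) = piT N M R x + (0, 1) := by
  simp only [piT, Prod.ext_iff, Prod.fst_add, Prod.snd_add, Prod.mk_add_mk]
  constructor
  · simp
  · show ((x.2 + 1 + (R:ℤ) * ((x.1 + 0) / N) : ℤ) : ZMod M) = _
    rw [add_zero]
    push_cast
    ring

lemma fst_neg_one_iff {N M R : ℕ} (x : ℤ × ℤ) :
    (piT N M R x).1 = -1 ↔ (N : ℤ) ∣ x.1 + 1 := by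
  have : (piT N M R x).1 = -1 ↔ ((x.1 + 1 : ℤ) : ZMod N) = 0 := by
    simp only [piT]
    push_cast
    constructor
    · intro h; rw [h]; ring
    · intro h; linear_combination h
  rw [this, ZMod.intCast_zmod_eq_zero_iff_dvd]

lemma piT_vert_seam {N M R : ℕ} (hN : 0 < N) {x : ℤ × ℤ} (h : (N : ℤ) ∣ x.1 + 1) :
    piT N M R (x + (1, 0)) = piT N M R x + (1, (R : ZMod M)) := by
  have hN0 : (N : ℤ) ≠ 0 := by exact_mod_cast hN.ne'
  obtain ⟨c, hc⟩ := h
  have h1 : x.1 = ((N : ℤ) - 1) + (c - 1) * N := by linarith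
  have h2 : x.1 + 1 = 0 + c * (N : ℤ) := by linarith
  have hd1 : x.1 / (N : ℤ) = c - 1 := by
    rw [h1, Int.add_mul_ediv_right _ _ hN0,
      Int.ediv_eq_zero_of_lt (by linarith) (by linarith)]
    ring
  have hd2 : (x.1 + 1) / (N : ℤ) = c := by
    rw [h2, Int.add_mul_ediv_right _ _ hN0, Int.zero_ediv]; ring
  simp only [piT, Prod.ext_iff, Prod.fst_add, Prod.snd_add, Prod.mk_add_mk]
  constructor
  · push_cast; ring
  · show ((x.2 + 0 + (R:ℤ) * ((x.1 + 1) / N) : ℤ) : ZMod M) = _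
    rw [hd2, add_zero]
    push_cast
    rw [hd1]
    push_cast
    ring

lemma piT_vert {N M R : ℕ} (hN : 0 < N) {x : ℤ × ℤ} (h : ¬ (N : ℤ) ∣ x.1 + 1) :
    piT N M R (x + (1, 0)) = piT N M R x + (1, 0) := by
  have hN0 : (N : ℤ) ≠ 0 := by exact_mod_cast hN.ne'
  set c := x.1 / (N : ℤ) with hc
  have hx : x.1 = x.1 % N + c * N := by
    rw [hc, Int.emod_def]; ring
  have he0 : 0 ≤ x.1 % N := Int.emod_nonneg _ hN0
  have he1 : x.1 % N < N := Int.emod_lt_of_pos _ (by exact_mod_cast hN)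
  have hne : x.1 % N ≠ (N : ℤ) - 1 := by
    intro he
    exact h ⟨c + 1, by rw [hx, he]; ring⟩
  have hlt : x.1 % N + 1 < (N : ℤ) := by
    rcases lt_or_eq_of_le (by omega : x.1 % N ≤ (N:ℤ) - 1) with h' | h'
    · omega
    · exact absurd h' hne
  have hd2 : (x.1 + 1) / (N : ℤ) = c := by
    have hx1 : x.1 + 1 = (x.1 % N + 1) + c * N := by linarith
    rw [hx1, Int.add_mul_ediv_right _ _ hN0,
      Int.ediv_eq_zero_of_lt (by linarith) hlt]
    ring
  simp only [piT, Prod.ext_iff, Prod.fst_add, Prod.snd_add, Prod.mk_add_mk]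
  constructor
  · push_cast; ring
  · show ((x.2 + 0 + (R:ℤ) * ((x.1 + 1) / N) : ℤ) : ZMod M) = _
    rw [hd2, add_zero]
    push_cast
    ring

lemma rel_key {N M R : ℕ} (hN : 0 < N) (z : ℤ × ℤ) (v : ZMod N × ZMod M) :
    (((piT N M R z).1 = v.1 ∧ v.2 = (piT N M R z).2 + 1) ∨
     ((piT N M R z).1 ≠ -1 ∧ v.1 = (piT N M R z).1 + 1 ∧ v.2 = (piT N M R z).2) ∨
     ((piT N M R z).1 = -1 ∧ v.1 = (piT N M R z).1 + 1 ∧ v.2 = (piT N M R z).2 + (R : ZMod M)))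
    ↔ (piT N M R (z + (0, 1)) = v ∨ piT N M R (z + (1, 0)) = v) := by
  by_cases h : (N : ℤ) ∣ z.1 + 1
  · rw [piT_horiz, piT_vert_seam hN h]
    have h1 := (fst_neg_one_iff (M := M) (R := R) z).2 h
    simp only [Prod.ext_iff, Prod.fst_add, Prod.snd_add]
    constructor
    · rintro (⟨h2, h3⟩ | ⟨h2, _⟩ | ⟨_, h2, h3⟩)
      · exact Or.inl ⟨by simpa using h2, by simpa using h3.symm⟩
      · exact absurd h1 h2
      · exact Or.inr ⟨by simpa using h2.symm, by simpa using h3.symm⟩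
    · rintro (⟨h2, h3⟩ | ⟨h2, h3⟩)
      · exact Or.inl ⟨by simpa using h2, by simpa using h3.symm⟩
      · exact Or.inr (Or.inr ⟨h1, by simpa using h2.symm, by simpa using h3.symm⟩)
  · rw [piT_horiz, piT_vert hN h]
    have h1 : ¬ (piT N M R z).1 = -1 := by rw [fst_neg_one_iff]; exact h
    simp only [Prod.ext_iff, Prod.fst_add, Prod.snd_add]
    constructor
    · rintro (⟨h2, h3⟩ | ⟨_, h2, h3⟩ | ⟨h2, _⟩)
      · exact Or.inl ⟨by simpa using h2, by simpa using h3.symm⟩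
      · exact Or.inr ⟨by simpa using h2.symm, by simpa using h3.symm⟩
      · exact absurd h2 h1
    · rintro (⟨h2, h3⟩ | ⟨h2, h3⟩)
      · exact Or.inl ⟨by simpa using h2, by simpa using h3.symm⟩
      · exact Or.inr (Or.inl ⟨h1, by simpa using h2.symm, by simpa using h3.symm⟩)

lemma adj_iff {N M R : ℕ} (hN : 0 < N) (x y : ℤ × ℤ) :
    (torus N M R).Adj (piT N M R x) (piT N M R y) ↔
      piT N M R x ≠ piT N M R y ∧
        (piT N M R (x + (0, 1)) = piT N M R y ∨ piT N M R (x + (1, 0)) = piT N M R y ∨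
         piT N M R (y + (0, 1)) = piT N M R x ∨ piT N M R (y + (1, 0)) = piT N M R x) := by
  rw [torus, SimpleGraph.fromRel_adj]
  rw [rel_key hN x (piT N M R y), rel_key hN y (piT N M R x)]
  tauto

lemma piT_shift {N M R : ℕ} (hN : 0 < N) {x y x' y' : ℤ × ℤ} (h : x - y = x' - y') :
    (piT N M R x = piT N M R y) ↔ (piT N M R x' = piT N M R y') := by
  rw [piT_eq_iff hN, piT_eq_iff hN, h]

lemma rho_mem {n d q s k : ℤ} (hdvd : q ∣ s * k - 1) (x : ℤ × ℤ) :
    (∃ a b : ℤ, x.1 = a * n ∧ x.2 = b * (d * q) - a * (d * s)) ↔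
    (∃ a b : ℤ, -x.2 = a * d ∧ x.1 = b * (n * q) - a * ((q - k) * n)) := by
  obtain ⟨t, ht⟩ := hdvd
  constructor
  · rintro ⟨a, b, h1, h2⟩
    exact ⟨a * s - b * q, a * s - b * (q - k) - a * t,
      by linear_combination -h2, by linear_combination h1 - (a * n) * ht⟩
  · rintro ⟨a, b, h1, h2⟩
    exact ⟨b * q - a * (q - k), b * s - a * s + a * t,
      by linear_combination h2, by linear_combination -h1 + (a * d) * ht⟩

set_option maxHeartbeats 2000000 in
lemma torus_iso (n m r d q s k M₂ R₂ : ℕ) (hn : 0 < n) (hd : 0 < d)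
    (hm' : (m : ℤ) = d * q) (hr' : (r : ℤ) = d * s) (hM : (M₂ : ℤ) = n * q)
    (hR : (R₂ : ℤ) = ((q : ℤ) - k) * n) (hdvd : (q : ℤ) ∣ (s : ℤ) * k - 1)
    (hq : 0 < q) :
    Nonempty (torus n m r ≃g torus d M₂ R₂) := by
  have hm : 0 < m := by
    have : (0 : ℤ) < m := by rw [hm']; positivity
    exact_mod_cast this
  have hM2 : 0 < M₂ := by
    have : (0 : ℤ) < M₂ := by rw [hM]; positivity
    exact_mod_cast this
  haveI : NeZero n := ⟨hn.ne'⟩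
  haveI : NeZero m := ⟨hm.ne'⟩
  haveI : NeZero d := ⟨hd.ne'⟩
  haveI : NeZero M₂ := ⟨hM2.ne'⟩
  set ρ : ℤ × ℤ → ℤ × ℤ := fun x => (-x.2, x.1) with hρ
  have key : ∀ x y : ℤ × ℤ,
      (piT d M₂ R₂ (ρ x) = piT d M₂ R₂ (ρ y)) ↔ (piT n m r x = piT n m r y) := by
    intro x y
    rw [piT_eq_iff hd, piT_eq_iff hn]
    have hsub : ρ x - ρ y = (-(x - y).2, (x - y).1) := by
      apply Prod.ext <;> simp [hρ] <;> ring
    rw [hsub]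
    simp only [InLat, hm', hr', hM, hR]
    exact (rho_mem hdvd (x - y)).symm
  set f : ZMod n × ZMod m → ZMod d × ZMod M₂ :=
    fun u => piT d M₂ R₂ (ρ ((u.1.val : ℤ), (u.2.val : ℤ))) with hf
  have hfpi : ∀ x : ℤ × ℤ, f (piT n m r x) = piT d M₂ R₂ (ρ x) := by
    intro x
    apply (key _ x).2
    exact piT_section hn hm _
  have hinj : Function.Injective f := by
    intro u v huv
    rw [← piT_section hn hm u, ← piT_section hn hm v] at huv ⊢
    rw [hfpi, hfpi] at huv
    exact (key _ _).1 huv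
  have hbij : Function.Bijective f := by
    rw [Fintype.bijective_iff_injective_and_card]
    refine ⟨hinj, ?_⟩
    simp only [Fintype.card_prod, ZMod.card]
    have : (n * m : ℤ) = d * M₂ := by rw [hm', hM]; ring
    exact_mod_cast this
  have hadj : ∀ u v, (torus d M₂ R₂).Adj (f u) (f v) ↔ (torus n m r).Adj u v := by
    intro u v
    obtain ⟨x, hx⟩ : ∃ x, piT n m r x = u := ⟨_, piT_section hn hm u⟩
    obtain ⟨y, hy⟩ : ∃ y, piT n m r y = v := ⟨_, piT_section hn hm v⟩
    subst hx hy
    rw [hfpi, hfpi, adj_iff hd (ρ x) (ρ y), adj_iff hn x y]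
    have e1 : (piT d M₂ R₂ (ρ x + (0, 1)) = piT d M₂ R₂ (ρ y)) ↔
        (piT n m r (x + (1, 0)) = piT n m r y) := by
      rw [piT_shift hd (x' := ρ (x + (1, 0))) (y' := ρ y)
        (by apply Prod.ext <;> simp [hρ] <;> ring)]
      exact key _ _
    have e2 : (piT d M₂ R₂ (ρ x + (1, 0)) = piT d M₂ R₂ (ρ y)) ↔
        (piT n m r (y + (0, 1)) = piT n m r x) := by
      rw [eq_comm, piT_shift hd (x' := ρ (y + (0, 1))) (y' := ρ x)
        (by apply Prod.ext <;> simp [hρ] <;> ring)]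
      exact key _ _
    have e3 : (piT d M₂ R₂ (ρ y + (0, 1)) = piT d M₂ R₂ (ρ x)) ↔
        (piT n m r (y + (1, 0)) = piT n m r x) := by
      rw [piT_shift hd (x' := ρ (y + (1, 0))) (y' := ρ x)
        (by apply Prod.ext <;> simp [hρ] <;> ring)]
      exact key _ _
    have e4 : (piT d M₂ R₂ (ρ y + (1, 0)) = piT d M₂ R₂ (ρ x)) ↔
        (piT n m r (x + (0, 1)) = piT n m r y) := by
      rw [eq_comm, piT_shift hd (x' := ρ (x + (0, 1))) (y' := ρ y)
        (by apply Prod.ext <;> simp [hρ] <;> ring)]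
      exact key _ _
    rw [e1, e2, e3, e4, ne_eq, key x y]
    tauto
  exact ⟨{ toEquiv := Equiv.ofBijective f hbij,
           map_rel_iff' := by intro u v; exact hadj u v }⟩

lemma modeq_iff {d q s k : ℕ} (hd : 0 < d) :
    (d ≡ d * s * k [MOD d * q]) ↔ (q : ℤ) ∣ (s : ℤ) * k - 1 := by
  have hd0 : (d : ℤ) ≠ 0 := by exact_mod_cast hd.ne'
  rw [Nat.modEq_iff_dvd]
  push_cast
  rw [show ((d : ℤ) * s * k - d) = (d : ℤ) * ((s : ℤ) * k - 1) by ring,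
    mul_comm (d : ℤ) (q : ℤ)]
  rw [show ((q : ℤ) * d) = (d : ℤ) * q by ring, mul_dvd_mul_iff_left hd0]

end Stmt7Aux

open Stmt7Aux

/-- the re-representation `T*(n,m,r) = T(gcd(r,m), mn/gcd(r,m), (m/gcd(r,m)-k)·n)`
where `k` is the unique integer with `0 ≤ k ≤ m/gcd(r,m) - 1` and `gcd(r,m) ≡ rk (mod m)`;
equality of the two representations is graph isomorphism.  Applying the operation twice
returns the original parameters: `T**(n,m,r) = T(n,m,r)`. -/
theorem stmt7 (n m r : ℕ) (hn : 1 ≤ n) (hm : 2 ≤ m) (hr1 : 1 ≤ r) (hr2 : r ≤ m) :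
    (∃! k : ℕ, k ≤ m / Nat.gcd r m - 1 ∧ Nat.gcd r m ≡ r * k [MOD m]) ∧
    ∀ k : ℕ, k ≤ m / Nat.gcd r m - 1 → Nat.gcd r m ≡ r * k [MOD m] →
      Nonempty (torus n m r ≃g
        torus (Nat.gcd r m) (m * n / Nat.gcd r m) ((m / Nat.gcd r m - k) * n)) ∧
      (∀ n' m' r' : ℕ, n' = Nat.gcd r m → m' = m * n / Nat.gcd r m →
        r' = (m / Nat.gcd r m - k) * n →
        ∀ k' : ℕ, k' ≤ m' / Nat.gcd r' m' - 1 → Nat.gcd r' m' ≡ r' * k' [MOD m'] →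
          (Nat.gcd r' m', m' * n' / Nat.gcd r' m', (m' / Nat.gcd r' m' - k') * n') =
            (n, m, r)) := by
  have hd : 0 < Nat.gcd r m := Nat.gcd_pos_of_pos_left m hr1
  set d := Nat.gcd r m with hdd
  set q := m / d with hqq
  set s := r / d with hss
  have hdm : d ∣ m := Nat.gcd_dvd_right r m
  have hdr : d ∣ r := Nat.gcd_dvd_left r m
  have hmdq : m = d * q := (Nat.mul_div_cancel' hdm).symm
  have hrds : r = d * s := (Nat.mul_div_cancel' hdr).symm
  have hq1 : 0 < q := Nat.div_pos (Nat.le_of_dvd (by omega) hdm) hd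
  have hs1 : 0 < s := Nat.div_pos (Nat.le_of_dvd hr1 hdr) hd
  have hsq : s ≤ q := Nat.div_le_div_right hr2
  have hcond : ∀ k : ℕ, (d ≡ r * k [MOD m]) ↔ (q : ℤ) ∣ (s : ℤ) * k - 1 := by
    intro k
    rw [hmdq, hrds]
    exact modeq_iff hd
  haveI : NeZero q := ⟨hq1.ne'⟩
  have hcop : Nat.Coprime s q := Nat.coprime_div_gcd_div_gcd hd
  set k₀ := ((s : ZMod q)⁻¹).val with hk₀def
  have hk₀lt : k₀ < q := ZMod.val_lt _
  have hk₀dvd : (q : ℤ) ∣ (s : ℤ) * k₀ - 1 := by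
    have h1 : ((s * k₀ : ℕ) : ZMod q) = ((1 : ℕ) : ZMod q) := by
      push_cast
      rw [hk₀def, ZMod.natCast_val, ZMod.cast_id]
      exact ZMod.coe_mul_inv_eq_one s hcop
    rw [ZMod.natCast_eq_natCast_iff, Nat.modEq_iff_dvd] at h1
    obtain ⟨c, hc⟩ := h1
    exact ⟨-c, by push_cast at hc ⊢; linarith⟩
  have huniq : ∀ k₁ k₂ : ℕ, k₁ < q → k₂ < q → (q:ℤ) ∣ (s:ℤ)*k₁ - 1 →
      (q:ℤ) ∣ (s:ℤ)*k₂ - 1 → k₁ = k₂ := by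
    intro k₁ k₂ hlt1 hlt2 h1 h2
    have h3 : (q:ℤ) ∣ (k₁:ℤ) - k₂ := by
      have := dvd_sub (h1.mul_right (k₂:ℤ)) (h2.mul_right (k₁:ℤ))
      rwa [show ((s:ℤ)*k₁ - 1)*k₂ - ((s:ℤ)*k₂ - 1)*k₁ = (k₁:ℤ) - k₂ by ring] at this
    by_contra hne
    have hz : (k₁:ℤ) - k₂ ≠ 0 := by
      intro h0
      exact hne (by omega)
    have hle := Int.le_of_dvd (abs_pos.mpr hz) ((dvd_abs _ _).mpr h3)
    have habs : |(k₁:ℤ) - k₂| < q := abs_lt.mpr ⟨by omega, by omega⟩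
    omega
  constructor
  · refine ⟨k₀, ⟨by omega, (hcond k₀).2 hk₀dvd⟩, ?_⟩
    rintro k' ⟨hk'le, hk'mod⟩
    exact huniq k' k₀ (by omega) hk₀lt ((hcond k').1 hk'mod) hk₀dvd
  · intro k hkle hkmod
    have hkq : k < q := by omega
    have hkdvd : (q:ℤ) ∣ (s:ℤ)*k - 1 := (hcond k).1 hkmod
    have hMnat : m * n / d = n * q := by
      rw [hmdq, show d * q * n = d * (n * q) by ring, Nat.mul_div_cancel_left _ hd]
    constructor
    · exact torus_iso n m r d q s k (m*n/d) ((q-k)*n) hn hd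
        (by exact_mod_cast hmdq) (by exact_mod_cast hrds)
        (by rw [hMnat]; push_cast; ring)
        (by push_cast [Nat.cast_sub hkq.le]; ring)
        hkdvd hq1
    · rintro n' m' r' rfl rfl rfl k' hk'le hk'mod
      -- gcd ((q-k)*n) (m*n/d) = n
      have hg : Nat.gcd ((q-k)*n) (m*n/d) = n := by
        rw [hMnat, show (q-k)*n = n*(q-k) by ring, Nat.gcd_mul_left]
        have hone : Nat.gcd (q-k) q = 1 := by
          have hg2 : Nat.gcd (q-k) q ∣ q := Nat.gcd_dvd_right _ _
          have hg3 : Nat.gcd (q-k) q ∣ k := by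
            have := Nat.dvd_sub hg2 (Nat.gcd_dvd_left (q-k) q)
            rwa [Nat.sub_sub_self hkq.le] at this
          have hdvd1 : ((Nat.gcd (q-k) q : ℕ):ℤ) ∣ 1 := by
            have d1 : ((Nat.gcd (q-k) q : ℕ):ℤ) ∣ (s:ℤ)*k - 1 :=
              dvd_trans (Int.natCast_dvd_natCast.mpr hg2) hkdvd
            have d2 : ((Nat.gcd (q-k) q : ℕ):ℤ) ∣ (s:ℤ)*k :=
              Dvd.dvd.mul_left (Int.natCast_dvd_natCast.mpr hg3) (s:ℤ)
            have := dvd_sub d2 d1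
            simpa using this
          exact Nat.dvd_one.mp (by exact_mod_cast hdvd1)
        rw [hone, mul_one]
      rw [hg] at hk'le hk'mod ⊢
      rw [hMnat] at hk'le hk'mod ⊢
      have hnq : n * q / n = q := Nat.mul_div_cancel_left _ hn
      rw [hnq] at hk'le ⊢
      have hk'q : k' < q := by omega
      -- translate hk'mod
      rw [show (q-k)*n*k' = n*(q-k)*k' by ring] at hk'mod
      have hk'dvd : (q:ℤ) ∣ ((q:ℤ) - k)*k' - 1 := by
        have := (modeq_iff hn).1 hk'mod
        rwa [Nat.cast_sub hkq.le] at this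
      have hcomb : (q:ℤ) ∣ (q:ℤ)*((s:ℤ)*k') - ((s:ℤ) + k') := by
        have := dvd_add (hk'dvd.mul_left (s:ℤ)) (hkdvd.mul_left (k':ℤ))
        rwa [show (s:ℤ)*(((q:ℤ)-k)*k' - 1) + (k':ℤ)*((s:ℤ)*k - 1)
          = (q:ℤ)*((s:ℤ)*k') - ((s:ℤ)+k') by ring] at this
      have hsk' : (q:ℤ) ∣ (s:ℤ) + k' := by
        have := dvd_sub (Dvd.intro _ rfl : (q:ℤ) ∣ (q:ℤ)*((s:ℤ)*k')) hcomb
        simpa using this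
      obtain ⟨c, hcc⟩ := hsk'
      have hc1 : c = 1 := by
        have h0 : (0:ℤ) < (q:ℤ)*c := by
          rw [← hcc]
          have : (0:ℤ) < (s:ℤ) := by exact_mod_cast hs1
          positivity
        have h2 : (q:ℤ)*c < 2*q := by
          rw [← hcc]
          have h1' : (s:ℤ) ≤ q := by exact_mod_cast hsq
          have h2' : (k':ℤ) < q := by exact_mod_cast hk'q
          linarith
        have hqpos : (0:ℤ) < q := by exact_mod_cast hq1
        by_contra hne
        rcases lt_or_gt_of_ne hne with h | h
        · have : c ≤ 0 := by omega
          nlinarith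
        · have : 2 ≤ c := by omega
          nlinarith
      have hk's : k' = q - s := by
        rw [hc1, mul_one] at hcc
        omega
      -- final tuple
      have c2 : n * q * d / n = m := by
        rw [show n * q * d = n * (q * d) by ring, Nat.mul_div_cancel_left _ hn,
          hmdq, mul_comm]
      have c3 : (q - k') * d = r := by
        rw [hk's, Nat.sub_sub_self hsq, hrds, mul_comm]
      rw [c2, c3]
end

section
/- In T(2n, 2m+1, r) with n, m ≥ 1 and 1 ≤ r ≤ 2m+1, the set M₁ consisting of all vertical edges v_{2k,j}v_{2k+1,j} for k ∈ Z_n and j ∈ Z_{2m+1} is a perfect matching, and its forcing number satisfies f(T(2n,2m+1,r), M₁) = n(m+1). -/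
open SimpleGraph

variable {V : Type*}

/-!
Lower bound: for each row pair `k` and column `j`, the vertices `(2k, j), (2k+1, j),
(2k+1, j+1), (2k, j+1)` form an `M₁`-alternating square, so a forcing set contains the
vertical edge of row pair `k` in column `j` or in column `j + 1`; hence it uses at least
`m + 1` of the `2m + 1` columns of every row pair.

Upper bound: take, in every row pair, the `m + 1` columns of even index. In a perfect matching
containing these edges, a vertex `(2k, j)` of an odd column cannot be matched horizontally, nor
to `(2k-1, j)` once the edge of row pair `k - 1` in column `j` is forced, nor across the twisted
wrap-around edge to `(2n-1, j-r)` once the edge of the last row pair in column `j - r` is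
forced. Propagating up each column and then along `j ↦ j - r` terminates because a suitable
potential on the odd columns decreases along that step. When `r ≡ 0` the wrap-around edges
close each column into a cycle, and the last row pair uses column `0` and the odd columns
instead.
-/

namespace SimpleGraph.Subgraph

variable {G : SimpleGraph V} {f : V → V}

def ofInvolutive (G : SimpleGraph V) (hf : Function.Involutive f) (hG : ∀ v, G.Adj v (f v)) :
    G.Subgraph where
  verts := Set.univ
  Adj u v := f u = v
  adj_sub := by rintro u _ rfl; exact hG u
  edge_vert _ := Set.mem_univ _
  symm := ⟨fun u v (h : f u = v) => show f v = u by rw [← h, hf u]⟩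

variable {hf : Function.Involutive f} {hG : ∀ v, G.Adj v (f v)}

@[simp]
theorem ofInvolutive_adj {u v : V} : (ofInvolutive G hf hG).Adj u v ↔ f u = v := Iff.rfl

theorem isPerfectMatching_ofInvolutive : (ofInvolutive G hf hG).IsPerfectMatching :=
  isPerfectMatching_iff.mpr fun v => ⟨f v, rfl, fun _ h => Eq.symm h⟩

theorem mem_edgeSet_ofInvolutive {e : Sym2 V} :
    e ∈ (ofInvolutive G hf hG).edgeSet ↔ ∃ v, e = s(v, f v) := by
  refine Sym2.ind (fun u w => ?_) e
  refine ⟨fun (h : f u = w) => ⟨u, by rw [h]⟩, ?_⟩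
  rintro ⟨v, hv⟩
  rcases Sym2.eq_iff.mp hv with ⟨rfl, rfl⟩ | ⟨rfl, rfl⟩
  exacts [rfl, hf _]

def flipSquare [DecidableEq V] (f : V → V) (a c : V) (v : V) : V :=
  if v = a then c else if v = c then a else if v = f a then f c else if v = f c then f a else f v

theorem involutive_flipSquare [DecidableEq V] (hf : Function.Involutive f) {a c : V}
    (hac : a ≠ c) (ha : a ≠ f a) (hc : c ≠ f c) (had : a ≠ f c) :
    Function.Involutive (flipSquare f a c) := by
  have hbc : f a ≠ c := fun h => had (by rw [← h, hf])
  have hbd : f a ≠ f c := fun h => hac (hf.injective h)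
  intro v
  unfold flipSquare
  split_ifs <;> simp_all [hf _, hf.eq_iff]

end SimpleGraph.Subgraph

open SimpleGraph.Subgraph

section ForcingSets

variable {G : SimpleGraph V} {f : V → V} {hf : Function.Involutive f} {hG : ∀ v, G.Adj v (f v)}

theorem IsForcingSet.mem_or_mem_of_square {S : Set (Sym2 V)}
    (hS : IsForcingSet G (ofInvolutive G hf hG) S) {a c : V} (hac : G.Adj a c)
    (hbd : G.Adj (f a) (f c)) (had : a ≠ f c) : s(a, f a) ∈ S ∨ s(c, f c) ∈ S := by
  classical
  by_contra! hnot
  have hg := involutive_flipSquare hf hac.ne (hG a).ne (hG c).ne had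
  have hgG : ∀ v, G.Adj v (flipSquare f a c v) := by
    intro v
    unfold flipSquare
    split_ifs with h1 h2 h3 h4
    exacts [h1 ▸ hac, h2 ▸ hac.symm, h3 ▸ hbd, h4 ▸ hbd.symm, hG v]
  have hsub : S ⊆ (ofInvolutive G hg hgG).edgeSet := by
    intro e he
    obtain ⟨v, rfl⟩ := mem_edgeSet_ofInvolutive.mp (hS.1 he)
    show flipSquare f a c v = f v
    unfold flipSquare
    split_ifs with h1 h2 h3 h4 <;> subst_vars
    · exact absurd he hnot.1
    · exact absurd he hnot.2
    · exact absurd (by rwa [hf, Sym2.eq_swap] at he) hnot.1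
    · exact absurd (by rwa [hf, Sym2.eq_swap] at he) hnot.2
    · rfl
  have hflip : (ofInvolutive G hg hgG).Adj a c := by simp [flipSquare]
  rw [hS.2 _ isPerfectMatching_ofInvolutive hsub, ofInvolutive_adj] at hflip
  exact had (by rw [← hflip, hf])

/- If another perfect matching `M' ⊇ S` matched `u` to some `w ≠ f u`, then `w` would have two
`M'`-partners, `u` and `f w`: the edge `w (f w)` lies in `M'` because it lies in `S` or, by
induction on `μ`, because it was forced earlier. -/
theorem isForcingSet_ofInvolutive {S : Set (Sym2 V)} (hS : S ⊆ (ofInvolutive G hf hG).edgeSet)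
    (R : V → Prop) (hR : ∀ v, R v ∨ R (f v)) (μ : V → ℕ) (hμ : ∀ v, μ (f v) = μ v)
    (h : ∀ u w, R u → s(u, f u) ∉ S → G.Adj u w → w ≠ f u → s(w, f w) ∈ S ∨ μ w < μ u) :
    IsForcingSet G (ofInvolutive G hf hG) S := by
  refine ⟨hS, fun M' hM' hSM' => ?_⟩
  have forced : ∀ B v, μ v = B → M'.Adj v (f v) := by
    intro B
    induction B using Nat.strong_induction_on with
    | _ B IH =>
    have forced_of_R : ∀ v, R v → μ v = B → M'.Adj v (f v) := by
      rintro v hv rfl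
      by_cases hvS : s(v, f v) ∈ S
      · exact hSM' hvS
      obtain ⟨w, hw, -⟩ := hM'.1 (hM'.2 v)
      by_contra hne
      have hwf : w ≠ f v := by rintro rfl; exact hne hw
      have hw' : M'.Adj w (f w) :=
        (h v w hv hvS (M'.adj_sub hw) hwf).elim (fun h => hSM' h) (fun h => IH _ h w rfl)
      exact hwf (by rw [hM'.1.eq_of_adj_left hw.symm hw', hf])
    intro v hv
    rcases hR v with h | h
    · exact forced_of_R v h hv
    · simpa [hf v] using (forced_of_R (f v) h (by rw [hμ, hv])).symm
  ext u w
  · exact iff_of_true (hM'.2 u) trivial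
  · exact ⟨fun h => hM'.1.eq_of_adj_left (forced _ u rfl) h,
      fun (h : f u = w) => h ▸ forced _ u rfl⟩

theorem forcingNum_eq_of_isForcingSet {M : G.Subgraph} {S₀ : Set (Sym2 V)} {k : ℕ}
    (hS₀ : IsForcingSet G M S₀) (hk : S₀.ncard = k)
    (hle : ∀ S, IsForcingSet G M S → k ≤ S.ncard) : forcingNum G M = k :=
  le_antisymm (Nat.sInf_le ⟨S₀, hS₀, hk⟩)
    (le_csInf ⟨k, S₀, hS₀, hk⟩ fun _ ⟨S, hS, hSk⟩ => hSk ▸ hle S hS)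

end ForcingSets

theorem Nat.card_le_two_mul_ncard_of_forall_mem_or_add_mem {α : Type*} [AddGroup α] [Finite α]
    {D : Set α} (g : α) (hD : ∀ x, x ∈ D ∨ x + g ∈ D) : Nat.card α ≤ 2 * D.ncard := by
  have hcover : Set.univ ⊆ D ∪ (· + -g) '' D := by
    intro x _
    rcases hD x with h | h
    exacts [Or.inl h, Or.inr ⟨x + g, h, by simp⟩]
  calc Nat.card α = (Set.univ : Set α).ncard := (Set.ncard_univ α).symm
    _ ≤ (D ∪ (· + -g) '' D).ncard := Set.ncard_le_ncard hcover
    _ ≤ D.ncard + ((· + -g) '' D).ncard := Set.ncard_union_le _ _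
    _ = 2 * D.ncard := by rw [Set.ncard_image_of_injective _ (add_left_injective _)]; ring

namespace ZMod

theorem val_add_one_of_lt {N : ℕ} {i : ZMod N} (h : i.val + 1 < N) :
    (i + 1).val = i.val + 1 := by
  have h1 : (1 : ZMod N).val = 1 := by rw [val_one_eq_one_mod, Nat.mod_eq_of_lt (by omega)]
  rw [val_add_of_lt (by rwa [h1]), h1]

theorem val_sub_one_of_ne_zero {N : ℕ} [NeZero N] {i : ZMod N} (h : i ≠ 0) :
    (i - 1).val = i.val - 1 := by
  have hi := (val_ne_zero i).mpr h
  have hlt := val_lt i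
  have h1 : (1 : ZMod N).val = 1 := by rw [val_one_eq_one_mod, Nat.mod_eq_of_lt (by omega)]
  rw [val_sub (by omega), h1]

theorem val_neg_one' (N : ℕ) [NeZero N] : (-1 : ZMod N).val = N - 1 := by
  obtain ⟨k, rfl⟩ := Nat.exists_eq_succ_of_ne_zero (NeZero.ne N)
  exact val_neg_one k

theorem val_sub_add_val {N : ℕ} [NeZero N] (a b : ZMod N) :
    (a - b).val + b.val = a.val ∨ (a - b).val + b.val = a.val + N := by
  have hsum := val_add (a - b) b
  rw [sub_add_cancel] at hsum
  have := val_lt (a - b)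
  have := val_lt b
  rcases lt_or_ge ((a - b).val + b.val) N with h | h
  · rw [Nat.mod_eq_of_lt h] at hsum
    exact Or.inl hsum.symm
  · rw [Nat.mod_eq_sub_mod h, Nat.mod_eq_of_lt (by omega)] at hsum
    omega

section EvenModulus

variable {n : ℕ} [NeZero n]

theorem val_add_one_of_even {i : ZMod (2 * n)} (h : Even i.val) : (i + 1).val = i.val + 1 :=
  val_add_one_of_lt (by have := val_lt i; rw [Nat.even_iff] at h; omega)

theorem val_sub_one_of_odd {i : ZMod (2 * n)} (h : Odd i.val) : (i - 1).val = i.val - 1 :=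
  val_sub_one_of_ne_zero (by rintro rfl; simp at h)

theorem odd_val_neg_one : Odd (-1 : ZMod (2 * n)).val := by
  rw [val_neg_one', Nat.odd_iff]
  have := NeZero.pos n
  omega

end EvenModulus

section OddModulus

variable {m : ℕ}

theorem even_val_add_one_and_sub_one {x : ZMod (2 * m + 1)} (hx : Odd x.val) :
    Even (x + 1).val ∧ Even (x - 1).val := by
  have hlt := val_lt x
  rw [Nat.odd_iff] at hx
  rw [val_add_one_of_lt (by omega), val_sub_one_of_ne_zero (by rintro rfl; simp at hx),
    Nat.even_iff, Nat.even_iff]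
  omega

theorem val_sub_lt_of_odd {x y : ZMod (2 * m + 1)} (hy : y ≠ 0) (hy2 : Even y.val)
    (hx : Odd x.val) (hxy : Odd (x - y).val) : (x - y).val < x.val := by
  have := (val_ne_zero y).mpr hy
  have := val_lt x
  rw [Nat.odd_iff] at hx hxy
  rw [Nat.even_iff] at hy2
  rcases val_sub_add_val x y with h | h <;> omega

theorem lt_val_sub_of_odd {x y : ZMod (2 * m + 1)} (hy : Odd y.val) (hx : Odd x.val)
    (hxy : Odd (x - y).val) : x.val < (x - y).val := by
  have := val_lt y
  rw [Nat.odd_iff] at hx hxy hy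
  rcases val_sub_add_val x y with h | h <;> omega

theorem ncard_setOf_even_val (m : ℕ) : {j : ZMod (2 * m + 1) | Even j.val}.ncard = m + 1 := by
  have hval : ∀ t ∈ Finset.range (m + 1), ((2 * t : ℕ) : ZMod (2 * m + 1)).val = 2 * t :=
    fun t ht => val_natCast_of_lt (by rw [Finset.mem_range] at ht; omega)
  have himage : {j : ZMod (2 * m + 1) | Even j.val} =
      ↑((Finset.range (m + 1)).image fun t => ((2 * t : ℕ) : ZMod (2 * m + 1))) := by
    ext j
    simp only [Set.mem_ofPred_eq, Finset.coe_image, Finset.coe_range, Set.mem_image,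
      Set.mem_Iio]
    constructor
    · rintro ⟨t, ht⟩
      have := val_lt j
      exact ⟨t, by omega, by rw [← two_mul] at ht; rw [← ht, natCast_zmod_val]⟩
    · rintro ⟨t, ht, rfl⟩
      rw [hval t (Finset.mem_range.mpr ht)]
      exact even_two_mul t
  rw [himage, Set.ncard_coe_finset, Finset.card_image_of_injOn, Finset.card_range]
  intro t ht t' ht' h
  have := congrArg val h
  simp only [hval t ht, hval t' ht'] at this
  omega

theorem ncard_setOf_even_val_sub (δ : ZMod (2 * m + 1)) :
    {j : ZMod (2 * m + 1) | Even (j - δ).val}.ncard = m + 1 := by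
  have himage : {j : ZMod (2 * m + 1) | Even (j - δ).val} = (· + δ) '' {j | Even j.val} := by
    ext j
    exact ⟨fun h => ⟨j - δ, h, sub_add_cancel j δ⟩, by rintro ⟨i, hi, rfl⟩; simpa using hi⟩
  rw [himage, Set.ncard_image_of_injective _ (add_left_injective δ), ncard_setOf_even_val]

end OddModulus

end ZMod

section Torus

theorem torus_adj_cases {N K r : ℕ} {u w : ZMod N × ZMod K} (h : (torus N K r).Adj u w) :
    w = (u.1, u.2 + 1) ∨ w = (u.1, u.2 - 1) ∨ (u.1 ≠ -1 ∧ w = (u.1 + 1, u.2)) ∨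
      (u.1 ≠ 0 ∧ w = (u.1 - 1, u.2)) ∨ (u.1 = -1 ∧ w = (0, u.2 + r)) ∨
      (u.1 = 0 ∧ w = (-1, u.2 - r)) := by
  obtain ⟨a, b⟩ := u
  obtain ⟨c, d⟩ := w
  simp only [torus, fromRel_adj] at h
  rcases h with ⟨-, (⟨h1, h2⟩ | ⟨h1, h2, h3⟩ | ⟨h1, h2, h3⟩) |
    (⟨h1, h2⟩ | ⟨h1, h2, h3⟩ | ⟨h1, h2, h3⟩)⟩
  all_goals simp only [Prod.mk.injEq] at h1 h2 ⊢
  all_goals subst_vars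
  · exact Or.inl ⟨rfl, rfl⟩
  · exact Or.inr <| Or.inr <| Or.inl ⟨h1, rfl, rfl⟩
  · exact Or.inr <| Or.inr <| Or.inr <| Or.inr <| Or.inl ⟨rfl, neg_add_cancel 1, rfl⟩
  · exact Or.inr <| Or.inl ⟨rfl, by ring⟩
  · exact Or.inr <| Or.inr <| Or.inr <| Or.inl
      ⟨fun h => h1 (eq_neg_of_add_eq_zero_left h), by ring, rfl⟩
  · exact Or.inr <| Or.inr <| Or.inr <| Or.inr <| Or.inr ⟨neg_add_cancel 1, rfl, by ring⟩

theorem torus_adj_add_one_right {N K r : ℕ} (hK : (1 : ZMod K) ≠ 0) (i : ZMod N)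
    (j : ZMod K) : (torus N K r).Adj (i, j) (i, j + 1) :=
  (fromRel_adj _ _ _).mpr
    ⟨fun h => hK (by simpa using congrArg Prod.snd h), Or.inl (Or.inl ⟨rfl, rfl⟩)⟩

theorem torus_adj_add_one_of_even {n K r : ℕ} [NeZero n] {i : ZMod (2 * n)} (h : Even i.val)
    (j : ZMod K) : (torus (2 * n) K r).Adj (i, j) (i + 1, j) := by
  have hne : (i, j) ≠ (i + 1, j) := fun h' => by
    have := congrArg (fun u => u.1.val) h'
    simp only [ZMod.val_add_one_of_even h] at this
    omega
  have hi : i ≠ -1 := by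
    rintro rfl
    exact Nat.not_even_iff_odd.mpr ZMod.odd_val_neg_one h
  exact (fromRel_adj _ _ _).mpr ⟨hne, Or.inl (Or.inr (Or.inl ⟨hi, rfl, rfl⟩))⟩

end Torus

def vertEdge (n : ℕ) {K : ℕ} (k : ℕ) (j : ZMod K) : Sym2 (ZMod (2 * n) × ZMod K) :=
  s((((2 * k : ℕ) : ZMod (2 * n)), j), (((2 * k + 1 : ℕ) : ZMod (2 * n)), j))

theorem vertEdge_inj {n K k k' : ℕ} {j j' : ZMod K} (hk : k < n) (hk' : k' < n) :
    vertEdge n k j = vertEdge n k' j' ↔ k = k' ∧ j = j' := by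
  refine ⟨fun h => ?_, by rintro ⟨rfl, rfl⟩; rfl⟩
  have hval : ∀ a < 2 * n, ((a : ℕ) : ZMod (2 * n)).val = a :=
    fun a ha => ZMod.val_natCast_of_lt ha
  simp only [vertEdge, Sym2.eq_iff, Prod.mk.injEq] at h
  rcases h with ⟨⟨h1, h2⟩, -⟩ | ⟨⟨h1, -⟩, -⟩
  · have := congrArg ZMod.val h1
    rw [hval _ (by omega), hval _ (by omega)] at this
    exact ⟨by omega, h2⟩
  · have := congrArg ZMod.val h1
    rw [hval _ (by omega), hval _ (by omega)] at this
    omega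

theorem ncard_setOf_vertEdge {n K : ℕ} [NeZero K] (P : ℕ → ZMod K → Prop) :
    {e | ∃ k j, k < n ∧ P k j ∧ e = vertEdge n k j}.ncard =
      ∑ k ∈ Finset.range n, {j | P k j}.ncard := by
  classical
  let T := (Finset.range n ×ˢ Finset.univ).filter fun p : ℕ × ZMod K => P p.1 p.2
  have hT : {e | ∃ k j, k < n ∧ P k j ∧ e = vertEdge n k j} =
      ↑(T.image fun p => vertEdge n p.1 p.2) := by
    ext e
    simp [T, eq_comm, and_assoc]
  rw [hT, Set.ncard_coe_finset, Finset.card_image_of_injOn, Finset.card_filter,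
    Finset.sum_product]
  · refine Finset.sum_congr rfl fun k _ => ?_
    rw [← Finset.card_filter, ← Set.ncard_coe_finset]
    congr 1
    ext j
    simp
  · rintro ⟨k, j⟩ hkj ⟨k', j'⟩ hkj' h
    simp only [T, Finset.coe_filter, Finset.mem_product, Finset.mem_range,
      Set.mem_ofPred_eq] at hkj hkj'
    obtain ⟨rfl, rfl⟩ := (vertEdge_inj hkj.1.1 hkj'.1.1).mp h
    rfl

section RowPartner

variable {n : ℕ} [NeZero n]

def rowPartner (i : ZMod (2 * n)) : ZMod (2 * n) := if Even i.val then i + 1 else i - 1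

theorem rowPartner_involutive : Function.Involutive (rowPartner (n := n)) := by
  intro i
  by_cases h : Even i.val
  · have h' : ¬Even (i + 1).val := by
      rw [ZMod.val_add_one_of_even h, Nat.even_add_one]
      exact not_not.mpr h
    simp [rowPartner, h, h']
  · have hodd := Nat.not_even_iff_odd.mp h
    have h' : Even (i - 1).val := by
      rw [ZMod.val_sub_one_of_odd hodd]
      exact Nat.Odd.sub_odd hodd odd_one
    simp [rowPartner, h, h']

theorem val_rowPartner_div_two (i : ZMod (2 * n)) : (rowPartner i).val / 2 = i.val / 2 := by
  unfold rowPartner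
  split_ifs with h
  · rw [ZMod.val_add_one_of_even h]
    rw [Nat.even_iff] at h
    omega
  · have h' := Nat.not_even_iff_odd.mp h
    rw [ZMod.val_sub_one_of_odd h']
    rw [Nat.odd_iff] at h'
    omega

theorem even_val_or_even_val_rowPartner (i : ZMod (2 * n)) :
    Even i.val ∨ Even (rowPartner i).val := by
  by_cases h : Even i.val
  · exact Or.inl h
  · have h' := Nat.not_even_iff_odd.mp h
    simp only [rowPartner, h, if_false, ZMod.val_sub_one_of_odd h']
    exact Or.inr (Nat.Odd.sub_odd h' odd_one)

theorem torus_adj_rowPartner {K r : ℕ} (i : ZMod (2 * n)) (j : ZMod K) :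
    (torus (2 * n) K r).Adj (i, j) (rowPartner i, j) := by
  by_cases h : Even i.val
  · simpa [rowPartner, h] using torus_adj_add_one_of_even h j
  · have hodd := Nat.not_even_iff_odd.mp h
    have h' : Even (i - 1).val := by
      rw [ZMod.val_sub_one_of_odd hodd]
      exact Nat.Odd.sub_odd hodd odd_one
    simpa [rowPartner, h] using (torus_adj_add_one_of_even (r := r) h' j).symm

theorem mk_rowPartner_eq_vertEdge {K : ℕ} (i : ZMod (2 * n)) (j : ZMod K) :
    s((i, j), (rowPartner i, j)) = vertEdge n (i.val / 2) j := by
  unfold vertEdge rowPartner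
  by_cases h : Even i.val
  · rw [if_pos h, Nat.two_mul_div_two_of_even h, Nat.cast_succ, ZMod.natCast_zmod_val]
  · have h' := Nat.not_even_iff_odd.mp h
    have hpos : 1 ≤ i.val := h'.pos
    rw [if_neg h, Nat.two_mul_div_two_add_one_of_odd h',
      Nat.two_mul_odd_div_two (Nat.odd_iff.mp h'), Nat.cast_sub hpos, ZMod.natCast_zmod_val,
      Nat.cast_one, Sym2.eq_swap]

theorem mk_natCast_rowPartner_eq_vertEdge {K k : ℕ} (hk : k < n) (j : ZMod K) :
    s((((2 * k : ℕ) : ZMod (2 * n)), j), (rowPartner ((2 * k : ℕ) : ZMod (2 * n)), j)) =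
      vertEdge n k j := by
  rw [mk_rowPartner_eq_vertEdge, ZMod.val_natCast_of_lt (by omega),
    Nat.mul_div_cancel_left _ two_pos]

end RowPartner

section VertMatching

variable {n m : ℕ} [NeZero n]

variable (n m) in
def vertMatching (r : ℕ) : (torus (2 * n) (2 * m + 1) r).Subgraph :=
  ofInvolutive (f := Prod.map rowPartner id) _ (rowPartner_involutive.prodMap fun _ => rfl)
    fun u => torus_adj_rowPartner (r := r) u.1 u.2

theorem edgeSet_vertMatching (r : ℕ) :
    (vertMatching n m r).edgeSet = {e | ∃ k j, k < n ∧ e = vertEdge n k j} := by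
  ext e
  rw [vertMatching, mem_edgeSet_ofInvolutive]
  constructor
  · rintro ⟨⟨i, j⟩, rfl⟩
    exact ⟨i.val / 2, j, by have := ZMod.val_lt i; omega, mk_rowPartner_eq_vertEdge i j⟩
  · rintro ⟨k, j, hk, rfl⟩
    exact ⟨(((2 * k : ℕ) : ZMod (2 * n)), j), (mk_natCast_rowPartner_eq_vertEdge hk j).symm⟩

theorem le_ncard_of_isForcingSet_vertMatching (hm : 1 ≤ m) {r : ℕ}
    {S : Set (Sym2 (ZMod (2 * n) × ZMod (2 * m + 1)))}
    (hS : IsForcingSet (torus (2 * n) (2 * m + 1) r) (vertMatching n m r) S) :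
    n * (m + 1) ≤ S.ncard := by
  have hSeq : S = {e | ∃ k j, k < n ∧ vertEdge n k j ∈ S ∧ e = vertEdge n k j} := by
    ext e
    refine ⟨fun he => ?_, by rintro ⟨k, j, -, he, rfl⟩; exact he⟩
    have he' := hS.1 he
    rw [edgeSet_vertMatching] at he'
    obtain ⟨k, j, hk, rfl⟩ := he'
    exact ⟨k, j, hk, he, rfl⟩
  have h1 : (1 : ZMod (2 * m + 1)) ≠ 0 := by
    have : Fact (1 < 2 * m + 1) := ⟨by omega⟩
    exact one_ne_zero
  have hrow : ∀ k < n, m + 1 ≤ {j | vertEdge n k j ∈ S}.ncard := by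
    intro k hk
    have hsquare (j : ZMod (2 * m + 1)) : vertEdge n k j ∈ S ∨ vertEdge n k (j + 1) ∈ S := by
      have := hS.mem_or_mem_of_square (a := (((2 * k : ℕ) : ZMod (2 * n)), j))
        (c := (((2 * k : ℕ) : ZMod (2 * n)), j + 1)) (torus_adj_add_one_right h1 _ _)
        (torus_adj_add_one_right h1 _ _) (fun h => h1 (by simpa using congrArg Prod.snd h))
      simpa only [Prod.map, id, mk_natCast_rowPartner_eq_vertEdge hk] using this
    have := Nat.card_le_two_mul_ncard_of_forall_mem_or_add_mem
      (D := {j | vertEdge n k j ∈ S}) 1 hsquare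
    rw [Nat.card_zmod] at this
    omega
  rw [hSeq, ncard_setOf_vertEdge]
  calc n * (m + 1) = ∑ _k ∈ Finset.range n, (m + 1) := by simp
    _ ≤ _ := Finset.sum_le_sum fun k hk => hrow k (Finset.mem_range.mp hk)

/- Forcing propagates up each column (the measure grows with the row pair) and, through the
wrap-around edges, from column `j - r` to column `j`, where `c` has to decrease. -/
theorem isForcingSet_vertMatching {r : ℕ} (C : ℕ → ZMod (2 * m + 1) → Prop)
    (c : ZMod (2 * m + 1) → ℕ) (hC : ∀ k < n, ∀ j, ¬C k j → C k (j + 1) ∧ C k (j - 1))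
    (hwrap : ∀ j, ¬C 0 j →
      (n = 1 ∧ (r : ZMod (2 * m + 1)) = 0) ∨ C (n - 1) (j - r) ∨ c (j - r) < c j) :
    IsForcingSet (torus (2 * n) (2 * m + 1) r) (vertMatching n m r)
      {e | ∃ k j, k < n ∧ C k j ∧ e = vertEdge n k j} := by
  have hrow (i : ZMod (2 * n)) : i.val / 2 < n := by have := ZMod.val_lt i; omega
  have hmem (i : ZMod (2 * n)) (j : ZMod (2 * m + 1)) (h : C (i.val / 2) j) :
      s((i, j), (rowPartner i, j)) ∈ {e | ∃ k j, k < n ∧ C k j ∧ e = vertEdge n k j} :=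
    ⟨_, j, hrow i, h, mk_rowPartner_eq_vertEdge i j⟩
  refine isForcingSet_ofInvolutive ?_ (fun u => Even u.1.val)
    (fun u => even_val_or_even_val_rowPartner u.1) (fun u => c u.2 * n + u.1.val / 2)
    (fun u => by simp [val_rowPartner_div_two]) ?_
  · show _ ⊆ (vertMatching n m r).edgeSet
    rw [edgeSet_vertMatching]
    rintro _ ⟨k, j, hk, -, rfl⟩
    exact ⟨k, j, hk, rfl⟩
  rintro ⟨i, j⟩ w (hi : Even i.val) hnS hadj hne
  simp only [Prod.map, id] at hnS hne ⊢
  have hCk : ¬C (i.val / 2) j := fun h => hnS (hmem i j h)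
  obtain ⟨hC1, hC2⟩ := hC _ (hrow i) j hCk
  rcases torus_adj_cases hadj with rfl | rfl | ⟨-, rfl⟩ | ⟨hi0, rfl⟩ | ⟨hi1, -⟩ | ⟨rfl, rfl⟩ <;>
    dsimp only at *
  · exact Or.inl (hmem i _ hC1)
  · exact Or.inl (hmem i _ hC2)
  · exact absurd (by simp [rowPartner, hi]) hne
  · right
    have := (ZMod.val_ne_zero i).mpr hi0
    rw [ZMod.val_sub_one_of_ne_zero hi0]
    rw [Nat.even_iff] at hi
    omega
  · exact absurd (hi1 ▸ hi) (Nat.not_even_iff_odd.mpr ZMod.odd_val_neg_one)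
  · have hval : (-1 : ZMod (2 * n)).val / 2 = n - 1 := by
      rw [ZMod.val_neg_one']
      omega
    rw [ZMod.val_zero] at hCk
    rcases hwrap j hCk with ⟨rfl, hr⟩ | h | h
    · refine absurd ?_ hne
      rw [hr, sub_zero]
      exact Prod.ext (show (-1 : ZMod (2 * 1)) = rowPartner 0 by decide) rfl
    · exact Or.inl (hmem (-1) _ (hval ▸ h))
    · right
      have hmul := Nat.mul_le_mul_right n (Nat.succ_le_of_lt h)
      rw [Nat.succ_mul] at hmul
      rw [hval, ZMod.val_zero]
      have := NeZero.pos n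
      omega

theorem exists_isForcingSet_evenShift {r : ℕ} (δ : ℕ → ZMod (2 * m + 1))
    (c : ZMod (2 * m + 1) → ℕ)
    (hwrap : ∀ j, Odd (j - δ 0).val →
      (n = 1 ∧ (r : ZMod (2 * m + 1)) = 0) ∨ Even (j - r - δ (n - 1)).val ∨ c (j - r) < c j) :
    ∃ S, IsForcingSet (torus (2 * n) (2 * m + 1) r) (vertMatching n m r) S ∧
      S.ncard = n * (m + 1) := by
  refine ⟨_, isForcingSet_vertMatching (fun k j => Even (j - δ k).val) c (fun k _ j hj => ?_)
    (fun j hj => hwrap j (Nat.not_even_iff_odd.mp hj)), ?_⟩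
  · rw [add_sub_right_comm, sub_right_comm]
    exact ZMod.even_val_add_one_and_sub_one (Nat.not_even_iff_odd.mp hj)
  · rw [ncard_setOf_vertEdge]
    simp [ZMod.ncard_setOf_even_val_sub]

theorem exists_isForcingSet_vertMatching_ncard_eq (r : ℕ) :
    ∃ S, IsForcingSet (torus (2 * n) (2 * m + 1) r) (vertMatching n m r) S ∧
      S.ncard = n * (m + 1) := by
  by_cases hr : (r : ZMod (2 * m + 1)) = 0
  · refine exists_isForcingSet_evenShift (fun k => if k + 1 = n then 1 else 0) 0 fun j hj => ?_
    rcases eq_or_ne n 1 with hn | hn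
    · exact Or.inl ⟨hn, hr⟩
    · rw [if_neg (by omega), sub_zero] at hj
      rw [if_pos (Nat.sub_add_cancel NeZero.one_le), hr, sub_zero]
      exact Or.inr (Or.inl (ZMod.even_val_add_one_and_sub_one hj).2)
  -- Between two odd columns, `j ↦ j - r` decreases `j.val` if `r` is even and increases it
  -- if `r` is odd.
  · refine exists_isForcingSet_evenShift 0
      (fun j => if Even (r : ZMod (2 * m + 1)).val then j.val else 2 * m + 1 - j.val)
      fun j hj => ?_
    simp only [Pi.zero_apply, sub_zero] at hj ⊢
    by_cases hjr : Even (j - (r : ZMod (2 * m + 1))).val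
    · exact Or.inr (Or.inl hjr)
    · have hjr' := Nat.not_even_iff_odd.mp hjr
      refine Or.inr (Or.inr ?_)
      split_ifs with hre
      · exact ZMod.val_sub_lt_of_odd hr hre hj hjr'
      · have := ZMod.lt_val_sub_of_odd (Nat.not_even_iff_odd.mp hre) hj hjr'
        have := ZMod.val_lt (j - (r : ZMod (2 * m + 1)))
        omega

end VertMatching

theorem stmt15_general (n m r : ℕ) (hn : 1 ≤ n) (hm : 1 ≤ m) :
    ∃ M₁ : (torus (2 * n) (2 * m + 1) r).Subgraph,
      M₁.verts = Set.univ ∧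
      M₁.edgeSet = {e | ∃ (k : ℕ) (j : ZMod (2 * m + 1)), k < n ∧
        e = s((((2 * k : ℕ) : ZMod (2 * n)), j), (((2 * k + 1 : ℕ) : ZMod (2 * n)), j))} ∧
      M₁.IsPerfectMatching ∧
      forcingNum (torus (2 * n) (2 * m + 1) r) M₁ = n * (m + 1) := by
  have : NeZero n := ⟨by omega⟩
  obtain ⟨S, hS, hcard⟩ := exists_isForcingSet_vertMatching_ncard_eq (n := n) (m := m) r
  exact ⟨vertMatching n m r, rfl, edgeSet_vertMatching r, isPerfectMatching_ofInvolutive,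
    forcingNum_eq_of_isForcingSet hS hcard
      fun _ hS' => le_ncard_of_isForcingSet_vertMatching hm hS'⟩

/-- the set of all vertical edges `v_{2k,j}v_{2k+1,j}` is a perfect matching
`M₁` of `T(2n, 2m+1, r)` with forcing number `n(m+1)`. -/
theorem stmt15 (n m r : ℕ) (hn : 1 ≤ n) (hm : 1 ≤ m) (hr1 : 1 ≤ r) (hr2 : r ≤ 2 * m + 1) :
    ∃ M₁ : (torus (2 * n) (2 * m + 1) r).Subgraph,
      M₁.verts = Set.univ ∧
      M₁.edgeSet = {e | ∃ (k : ℕ) (j : ZMod (2 * m + 1)), k < n ∧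
        e = s((((2 * k : ℕ) : ZMod (2 * n)), j), (((2 * k + 1 : ℕ) : ZMod (2 * n)), j))} ∧
      M₁.IsPerfectMatching ∧
      forcingNum (torus (2 * n) (2 * m + 1) r) M₁ = n * (m + 1) :=
  stmt15_general n m r hn hm
end

section
/- Let M be the perfect matching of the prism C_{2m+1} □ P₂ over an odd cycle, m ≥ 1, consisting of all 2m+1 rung edges. Then any forcing set of M has size at least m+1; equivalently, every subset S ⊆ M with |S| ≤ m is contained in at least two perfect matchings. -/
open SimpleGraph

variable {V : Type*}

/-- The matching obtained from the all-rungs matching by swapping along the 4-cycle over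
the cycle edge `{c, c'}`. -/
def swapMatch (n : ℕ) (c c' : Fin n) (hadj : (cycleGraph n).Adj c c') :
    (cycleGraph n □ pathGraph 2).Subgraph where
  verts := Set.univ
  Adj x y := (∃ d : Fin n, d ≠ c ∧ d ≠ c' ∧ s(x,y) = s((d,(0:Fin 2)),(d,(1:Fin 2)))) ∨
    s(x,y) = s((c,(0:Fin 2)),(c',(0:Fin 2))) ∨ s(x,y) = s((c,(1:Fin 2)),(c',(1:Fin 2)))
  adj_sub := by
    rintro x y (⟨d, hd1, hd2, hd⟩ | hd | hd) <;>
      rcases Sym2.eq_iff.mp hd with ⟨rfl, rfl⟩ | ⟨rfl, rfl⟩ <;>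
      simp [boxProd_adj, pathGraph_adj, hadj, hadj.symm]
  edge_vert := by intros; trivial
  symm := by
    constructor
    intro x y h
    rw [Sym2.eq_swap]
    exact h

lemma swapMatch_unique (n : ℕ) (c c' : Fin n) (hadj : (cycleGraph n).Adj c c')
    (a : Fin n) (i : Fin 2) (w : Fin n × Fin 2)
    (hw : (swapMatch n c c' hadj).Adj (a, i) w) :
    w = if a = c then (c', i) else if a = c' then (c, i) else (a, i + 1) := by
  have hne : c ≠ c' := hadj.ne
  rcases hw with ⟨d, hd1, hd2, hd⟩ | hd | hd <;>
    rcases Sym2.eq_iff.mp hd with ⟨h1, h2⟩ | ⟨h1, h2⟩ <;>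
    rw [Prod.mk.injEq] at h1 <;>
    obtain ⟨rfl, rfl⟩ := h1 <;>
    subst h2 <;>
    simp_all [show ((1:Fin 2))+1 = 0 from rfl, hne, Ne.symm hne]

lemma swapMatch_pm (n : ℕ) (c c' : Fin n) (hadj : (cycleGraph n).Adj c c') :
    (swapMatch n c c' hadj).IsPerfectMatching := by
  have hne : c ≠ c' := hadj.ne
  rw [Subgraph.isPerfectMatching_iff]
  rintro ⟨a, i⟩
  refine ⟨if a = c then (c', i) else if a = c' then (c, i) else (a, i + 1), ?_,
    fun w hw => swapMatch_unique n c c' hadj a i w hw⟩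
  by_cases hac : a = c
  · subst hac
    simp only [if_pos rfl]
    rcases (by omega : i = 0 ∨ i = 1) with rfl | rfl
    · exact Or.inr (Or.inl rfl)
    · exact Or.inr (Or.inr rfl)
  · by_cases hac' : a = c'
    · subst hac'
      simp only [if_neg hac, if_pos rfl]
      have : (swapMatch n c a hadj).Adj (c, i) (a, i) := by
        rcases (by omega : i = 0 ∨ i = 1) with rfl | rfl
        · exact Or.inr (Or.inl rfl)
        · exact Or.inr (Or.inr rfl)
      exact this.symm
    · simp only [if_neg hac, if_neg hac']
      refine Or.inl ⟨a, hac, hac', ?_⟩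
      rcases (by omega : i = 0 ∨ i = 1) with rfl | rfl
      · rfl
      · rw [show ((1:Fin 2))+1 = 0 from rfl, Sym2.eq_swap]

/-- in the odd prism `C_{2m+1} □ P₂`, the perfect matching of all rung
edges has every forcing set of size at least `m + 1`. -/
theorem stmt16 (m : ℕ) (hm : 1 ≤ m)
    (M : (cycleGraph (2 * m + 1) □ pathGraph 2).Subgraph)
    (hverts : M.verts = Set.univ)
    (hedges : M.edgeSet =
      {e | ∃ c : Fin (2 * m + 1), e = s((c, (0 : Fin 2)), (c, (1 : Fin 2)))}) :
    M.IsPerfectMatching ∧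
    ∀ S : Set (Sym2 (Fin (2 * m + 1) × Fin 2)),
      IsForcingSet (cycleGraph (2 * m + 1) □ pathGraph 2) M S → m + 1 ≤ S.ncard := by
  have h01 : (0 : Fin 2) ≠ 1 := by decide
  have hMadj : ∀ x y, M.Adj x y ↔
      ∃ c : Fin (2 * m + 1), s(x,y) = s((c, (0:Fin 2)), (c, (1:Fin 2))) := by
    intro x y
    rw [← Subgraph.mem_edgeSet, hedges]
    rfl
  -- M is a perfect matching
  have hMpm : M.IsPerfectMatching := by
    rw [Subgraph.isPerfectMatching_iff]
    rintro ⟨a, i⟩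
    rcases (by omega : i = 0 ∨ i = 1) with rfl | rfl
    · refine ⟨(a, 1), (hMadj _ _).mpr ⟨a, rfl⟩, fun w hw => ?_⟩
      obtain ⟨d, hd⟩ := (hMadj _ _).mp hw
      rcases Sym2.eq_iff.mp hd with ⟨h1, h2⟩ | ⟨h1, h2⟩ <;>
        rw [Prod.mk.injEq] at h1
      · obtain ⟨rfl, -⟩ := h1; exact h2
      · exact absurd h1.2 h01
    · refine ⟨(a, 0), (hMadj _ _).mpr ⟨a, Sym2.eq_swap⟩, fun w hw => ?_⟩
      obtain ⟨d, hd⟩ := (hMadj _ _).mp hw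
      rcases Sym2.eq_iff.mp hd with ⟨h1, h2⟩ | ⟨h1, h2⟩ <;>
        rw [Prod.mk.injEq] at h1
      · exact absurd h1.2 (Ne.symm h01)
      · obtain ⟨rfl, -⟩ := h1; exact h2
  refine ⟨hMpm, fun S hS => ?_⟩
  by_contra hcard
  push_neg at hcard
  have hScard : S.ncard ≤ m := by omega
  obtain ⟨hsub, hforce⟩ := hS
  set f : Fin (2 * m + 1) → Sym2 (Fin (2 * m + 1) × Fin 2) :=
    fun c => s((c, (0:Fin 2)), (c, (1:Fin 2))) with hf
  have hfinj : Function.Injective f := by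
    intro c d h
    rcases Sym2.eq_iff.mp h with ⟨h1, -⟩ | ⟨h1, -⟩ <;> rw [Prod.mk.injEq] at h1
    · exact h1.1
    · exact absurd h1.2 h01
  have hrange : S ⊆ Set.range f := by
    intro e he
    obtain ⟨c, hc⟩ := (hedges ▸ hsub he)
    exact ⟨c, hc.symm⟩
  set T : Set (Fin (2 * m + 1)) := f ⁻¹' S with hT
  have hTcard : T.ncard ≤ m := by
    rw [hT]
    calc (f ⁻¹' S).ncard = (f '' (f ⁻¹' S)).ncard :=
          (Set.ncard_image_of_injective _ hfinj).symm
      _ = S.ncard := by rw [Set.image_preimage_eq_of_subset hrange]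
      _ ≤ m := hScard
  -- find two consecutive untouched rungs
  have hcons : ∃ c : Fin (2 * m + 1), c ∉ T ∧ c + 1 ∉ T := by
    by_contra hno
    push_neg at hno
    have h1 : (Tᶜ).ncard ≤ T.ncard := by
      calc Tᶜ.ncard = ((· + (1 : Fin (2*m+1))) '' Tᶜ).ncard :=
            (Set.ncard_image_of_injective _ (add_left_injective 1)).symm
        _ ≤ T.ncard := Set.ncard_le_ncard (by rintro x ⟨cc, hc, rfl⟩; exact hno cc hc)
            (Set.toFinite T)
    have h2 : T.ncard + Tᶜ.ncard = 2*m+1 := by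
      rw [Set.ncard_add_ncard_compl, Nat.card_eq_fintype_card, Fintype.card_fin]
    omega
  obtain ⟨c, hc0, hc1⟩ := hcons
  have hadj : (cycleGraph (2*m+1)).Adj c (c+1) := by
    rw [cycleGraph_adj']
    right
    rw [add_sub_cancel_left]
    simp [Fin.val_one', Nat.mod_eq_of_lt]
    omega
  set M' := swapMatch (2*m+1) c (c+1) hadj with hM'
  have hSsub' : S ⊆ M'.edgeSet := by
    intro e he
    obtain ⟨d, hd⟩ := hrange he
    have hdc : d ≠ c := fun h => hc0 (by rw [hT, Set.mem_preimage, ← h, hd]; exact he)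
    have hdc1 : d ≠ c + 1 := fun h => hc1 (by rw [hT, Set.mem_preimage, ← h, hd]; exact he)
    rw [← hd, hf]
    exact Subgraph.mem_edgeSet.mpr (Or.inl ⟨d, hdc, hdc1, rfl⟩)
  have heq : M' = M := hforce M' (swapMatch_pm _ _ _ hadj) hSsub'
  have hadj' : M'.Adj (c, (0:Fin 2)) (c+1, (0:Fin 2)) := Or.inr (Or.inl rfl)
  rw [heq, hMadj] at hadj'
  obtain ⟨d, hd⟩ := hadj'
  rcases Sym2.eq_iff.mp hd with ⟨-, h2⟩ | ⟨h1, -⟩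
  · rw [Prod.mk.injEq] at h2; exact h01 h2.2
  · rw [Prod.mk.injEq] at h1; exact h01 h1.2
end

section
/- Let M be the perfect matching of the prism C_{2m} □ P₂ (m ≥ 1) consisting of all 2m rung edges. Then C_{2m} □ P₂ contains m pairwise vertex-disjoint M-alternating cycles, and hence every forcing set of M has size at least m. -/
open SimpleGraph

variable {V : Type*}

/-! The squares spanned by the columns `2i` and `2i + 1` of the prism are `m` vertex-disjoint
`M`-alternating 4-cycles. Switching a perfect matching along an alternating cycle (taking the
symmetric difference) gives another perfect matching, which contains every edge of `M` off the
cycle; so a forcing set meets each square, and it meets disjoint squares in distinct edges. -/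

open scoped symmDiff

namespace SimpleGraph

variable {G : SimpleGraph V} {M : G.Subgraph}

lemma Walk.IsCycle.isAlternating_of_forall_exists_adj {u : V} {p : G.Walk u u} (hp : p.IsCycle)
    (hM : M.IsMatching) (hcov : ∀ v ∈ p.support, ∃ w, M.Adj v w ∧ s(v, w) ∈ p.edges) :
    p.toSubgraph.spanningCoe.IsAlternating M.spanningCoe := by
  intro v w w' hww' hvw hvw'
  simp only [Subgraph.spanningCoe_adj] at hvw hvw' ⊢
  obtain ⟨x, hvx, hxp⟩ := hcov v (Walk.mem_support_of_adj_toSubgraph hvw)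
  -- the partner `x` is a cycle neighbour of `v`, and `v` has only two of them
  have hx : x = w ∨ x = w' := by
    by_contra! hne
    obtain ⟨y, -, hy⟩ := hp.isCycles_spanningCoe_toSubgraph.existsUnique_ne_adj hvw
    have hxadj : p.toSubgraph.spanningCoe.Adj v x := Walk.adj_toSubgraph_iff_mem_edges.mpr hxp
    exact hne.2 ((hy x ⟨hne.1.symm, hxadj⟩).trans (hy w' ⟨hww', hvw'⟩).symm)
  refine ⟨fun h h' ↦ hww' (hM.eq_of_adj_left h h'), fun h ↦ ?_⟩
  rcases hx with rfl | rfl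
  exacts [hvx, absurd hvx h]

end SimpleGraph

section Forcing

variable {G : SimpleGraph V} {M : G.Subgraph} {S : Set (Sym2 V)}

lemma IsForcingSet.exists_mem_edges_of_isAlternating (hS : IsForcingSet G M S)
    (hM : M.IsPerfectMatching) {u : V} {p : G.Walk u u} (hp : p.IsCycle)
    (halt : p.toSubgraph.spanningCoe.IsAlternating M.spanningCoe) : ∃ e ∈ S, e ∈ p.edges := by
  set C := p.toSubgraph.spanningCoe
  have hle : M.spanningCoe ∆ C ≤ G :=
    symmDiff_le_sup.trans (sup_le M.spanningCoe_le p.toSubgraph.spanningCoe_le)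
  set M' : G.Subgraph := G.toSubgraph (M.spanningCoe ∆ C) hle
  have hM' : M'.IsPerfectMatching :=
    (Subgraph.IsPerfectMatching.toSubgraph_iff (M := ⊤) hle).mpr
      (hM.symmDiff_of_isAlternating halt hp.isCycles_spanningCoe_toSubgraph)
  by_contra! hSp
  have hSM' : S ⊆ M'.edgeSet := by
    intro e he
    induction e using Sym2.ind with | _ a b => ?_
    exact Or.inl ⟨hS.1 he, fun h ↦ hSp _ he (Walk.adj_toSubgraph_iff_mem_edges.mp h)⟩
  have hC : C.Adj u p.snd :=
    Walk.adj_toSubgraph_iff_mem_edges.mpr (p.mk_start_snd_mem_edges hp.not_nil)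
  have hflip : M'.Adj u p.snd ↔ ¬ M.Adj u p.snd := by
    simp [M', symmDiff_def, hC]
  rw [hS.2 M' hM' hSM'] at hflip
  exact iff_not_self hflip

lemma IsForcingSet.card_le_ncard_of_disjoint_alternating_cycles [Finite V]
    (hS : IsForcingSet G M S) (hM : M.IsPerfectMatching) {ι : Type*}
    (c : ι → Σ v : V, G.Walk v v)
    (hc : ∀ i, (c i).2.IsCycle)
    (halt : ∀ i, (c i).2.toSubgraph.spanningCoe.IsAlternating M.spanningCoe)
    (hdisj : ∀ i j, i ≠ j → ∀ x, x ∈ (c i).2.support → x ∉ (c j).2.support) :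
    Nat.card ι ≤ S.ncard := by
  choose e heS he using fun i ↦ hS.exists_mem_edges_of_isAlternating hM (hc i) (halt i)
  have hinj : Function.Injective fun i ↦ (⟨e i, heS i⟩ : S) := by
    intro i j hij
    have hij : e i = e j := congrArg Subtype.val hij
    by_contra hne
    have hx := (e i).out_fst_mem
    exact hdisj i j hne _ ((c i).2.mem_support_of_mem_edges (he i) hx)
      ((c j).2.mem_support_of_mem_edges (hij ▸ he j) hx)
  rw [← Nat.card_coe_set_eq]
  exact Nat.card_le_card_of_injective _ hinj

end Forcing

lemma fin_two_ne_iff_eq_rev (a b : Fin 2) : a ≠ b ↔ b = a.rev := by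
  fin_cases a <;> fin_cases b <;> decide

section Rungs

variable {W : Type*} {H : SimpleGraph W} {M : (H □ pathGraph 2).Subgraph}

lemma adj_iff_of_edgeSet_eq_rungs
    (hedges : M.edgeSet = {e | ∃ c : W, e = s((c, (0 : Fin 2)), (c, (1 : Fin 2)))})
    {v w : W × Fin 2} : M.Adj v w ↔ v.1 = w.1 ∧ v.2 ≠ w.2 := by
  obtain ⟨a, i⟩ := v
  obtain ⟨b, j⟩ := w
  rw [← Subgraph.mem_edgeSet, hedges]
  fin_cases i <;> fin_cases j <;> simp [eq_comm]

lemma isPerfectMatching_of_edgeSet_eq_rungs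
    (hedges : M.edgeSet = {e | ∃ c : W, e = s((c, (0 : Fin 2)), (c, (1 : Fin 2)))}) :
    M.IsPerfectMatching := by
  refine Subgraph.isPerfectMatching_iff.mpr fun v ↦ ⟨(v.1, v.2.rev), ?_, fun w hw ↦ ?_⟩
  · exact (adj_iff_of_edgeSet_eq_rungs hedges).mpr ⟨rfl, (fin_two_ne_iff_eq_rev _ _).mpr rfl⟩
  · obtain ⟨h1, h2⟩ := (adj_iff_of_edgeSet_eq_rungs hedges).mp hw
    exact Prod.ext h1.symm ((fin_two_ne_iff_eq_rev _ _).mp h2)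

end Rungs

lemma cycleGraph_adj_of_val_add_one {n : ℕ} {a b : Fin n} (h : a.val + 1 = b.val) :
    (cycleGraph n).Adj a b := by
  rw [cycleGraph_adj']
  right
  rw [Fin.coe_sub_iff_le.mpr (Fin.le_iff_val_le_val.mpr (by omega))]
  omega

lemma pathGraph_two_adj : (pathGraph 2).Adj 0 1 := by simp [pathGraph_adj]

section Square

variable {m : ℕ}

def evenCol (i : Fin m) : Fin (2 * m) := ⟨2 * i.val, by omega⟩

def oddCol (i : Fin m) : Fin (2 * m) := ⟨2 * i.val + 1, by omega⟩

def prismSquare (i : Fin m) :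
    (cycleGraph (2 * m) □ pathGraph 2).Walk (evenCol i, 0) (evenCol i, 0) :=
  have hcol : (cycleGraph (2 * m)).Adj (evenCol i) (oddCol i) := cycleGraph_adj_of_val_add_one rfl
  .cons (boxProd_adj_left.mpr hcol)
    (.cons (boxProd_adj_right.mpr pathGraph_two_adj)
      (.cons (boxProd_adj_left.mpr hcol.symm)
        (.cons (boxProd_adj_right.mpr pathGraph_two_adj.symm) .nil)))

lemma prismSquare_edges (i : Fin m) : (prismSquare i).edges =
    [s((evenCol i, 0), (oddCol i, 0)), s((oddCol i, 0), (oddCol i, 1)),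
     s((oddCol i, 1), (evenCol i, 1)), s((evenCol i, 1), (evenCol i, 0))] := rfl

lemma prismSquare_support (i : Fin m) : (prismSquare i).support =
    [(evenCol i, 0), (oddCol i, 0), (oddCol i, 1), (evenCol i, 1), (evenCol i, 0)] := rfl

lemma prismSquare_isCycle (i : Fin m) : (prismSquare i).IsCycle := by
  refine (Walk.isCycle_def _).mpr ⟨?_, by simp [prismSquare], ?_⟩
  · rw [Walk.isTrail_def, prismSquare_edges]
    simp [Prod.ext_iff, evenCol, oddCol, Fin.ext_iff]
  · rw [prismSquare_support]
    simp [Prod.ext_iff, evenCol, oddCol, Fin.ext_iff]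

lemma val_div_two_of_mem_prismSquare_support {i : Fin m} {x : Fin (2 * m) × Fin 2}
    (hx : x ∈ (prismSquare i).support) : x.1.val / 2 = i.val := by
  rw [prismSquare_support] at hx
  simp only [List.mem_cons, List.not_mem_nil, or_false] at hx
  rcases hx with rfl | rfl | rfl | rfl | rfl <;> dsimp only [evenCol, oddCol] <;> omega

variable {M : (cycleGraph (2 * m) □ pathGraph 2).Subgraph}
  (hedges : M.edgeSet = {e | ∃ c : Fin (2 * m), e = s((c, (0 : Fin 2)), (c, (1 : Fin 2)))})
include hedges

lemma cyclicAlt_prismSquare (i : Fin m) : CyclicAlt M.edgeSet (prismSquare i).edges := by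
  rw [CyclicAlt, prismSquare_edges]
  change List.IsChain _ _
  simp [Subgraph.mem_edgeSet, adj_iff_of_edgeSet_eq_rungs hedges, evenCol, oddCol, Fin.ext_iff]

lemma prismSquare_isAlternating (i : Fin m) :
    (prismSquare i).toSubgraph.spanningCoe.IsAlternating M.spanningCoe := by
  refine (prismSquare_isCycle i).isAlternating_of_forall_exists_adj
    (isPerfectMatching_of_edgeSet_eq_rungs hedges).1 fun v hv ↦ ?_
  refine ⟨(v.1, v.2.rev), (adj_iff_of_edgeSet_eq_rungs hedges).mpr
    ⟨rfl, (fin_two_ne_iff_eq_rev _ _).mpr rfl⟩, ?_⟩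
  rw [prismSquare_support] at hv
  simp only [List.mem_cons, List.not_mem_nil, or_false] at hv
  rcases hv with rfl | rfl | rfl | rfl | rfl <;> simp [prismSquare_edges]

end Square

theorem stmt17_general (m : ℕ)
    (M : (cycleGraph (2 * m) □ pathGraph 2).Subgraph)
    (hedges : M.edgeSet =
      {e | ∃ c : Fin (2 * m), e = s((c, (0 : Fin 2)), (c, (1 : Fin 2)))}) :
    M.IsPerfectMatching ∧
    (∃ f : Fin m → Σ v : Fin (2 * m) × Fin 2, (cycleGraph (2 * m) □ pathGraph 2).Walk v v,
      (∀ i, (f i).2.IsCycle ∧ CyclicAlt M.edgeSet (f i).2.edges) ∧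
      (∀ i j, i ≠ j → ∀ x, x ∈ (f i).2.support → x ∉ (f j).2.support)) ∧
    ∀ S : Set (Sym2 (Fin (2 * m) × Fin 2)),
      IsForcingSet (cycleGraph (2 * m) □ pathGraph 2) M S → m ≤ S.ncard := by
  have hM := isPerfectMatching_of_edgeSet_eq_rungs hedges
  let f (i : Fin m) : Σ v : Fin (2 * m) × Fin 2, (cycleGraph (2 * m) □ pathGraph 2).Walk v v :=
    ⟨_, prismSquare i⟩
  have hdisj : ∀ i j, i ≠ j → ∀ x, x ∈ (f i).2.support → x ∉ (f j).2.support :=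
    fun i j hij _ hi hj ↦ hij <| Fin.ext <|
      (val_div_two_of_mem_prismSquare_support hi).symm.trans
        (val_div_two_of_mem_prismSquare_support hj)
  refine ⟨hM, ⟨f, fun i ↦ ⟨prismSquare_isCycle i, cyclicAlt_prismSquare hedges i⟩, hdisj⟩,
    fun S hS ↦ ?_⟩
  simpa using hS.card_le_ncard_of_disjoint_alternating_cycles hM f prismSquare_isCycle
    (prismSquare_isAlternating hedges) hdisj

/-- in the even prism `C_{2m} □ P₂`, the rung perfect matching admits `m`
pairwise vertex-disjoint alternating cycles, so every forcing set has size at least `m`. -/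
theorem stmt17 (m : ℕ) (hm : 1 ≤ m)
    (M : (cycleGraph (2 * m) □ pathGraph 2).Subgraph)
    (hverts : M.verts = Set.univ)
    (hedges : M.edgeSet =
      {e | ∃ c : Fin (2 * m), e = s((c, (0 : Fin 2)), (c, (1 : Fin 2)))}) :
    M.IsPerfectMatching ∧
    (∃ f : Fin m → Σ v : Fin (2 * m) × Fin 2, (cycleGraph (2 * m) □ pathGraph 2).Walk v v,
      (∀ i, (f i).2.IsCycle ∧ CyclicAlt M.edgeSet (f i).2.edges) ∧
      (∀ i j, i ≠ j → ∀ x, x ∈ (f i).2.support → x ∉ (f j).2.support)) ∧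
    ∀ S : Set (Sym2 (Fin (2 * m) × Fin 2)),
      IsForcingSet (cycleGraph (2 * m) □ pathGraph 2) M S → m ≤ S.ncard :=
  stmt17_general m M hedges
end
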